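/- arXiv:2409.09465 — 7 statements merged into one kernel-verified Lean document; each statement's English description precedes it below -/
import Mathlib

section
/- Let (G,p) and (G,q) be two non-congruent frameworks in ℝ^d with corresponding bar lengths the same. Then p - q is a non-trivial infinitesimal flex of (G, (p+q)/2), in the sense that there exists a pair of vertices i,j with ((p_i+q_i)/2 - (p_j+q_j)/2)·((p_i-q_i) - (p_j-q_j)) ≠ 0. -/
open scoped RealInnerProductSpace

/-- If `(G, p)` and `(G, q)` are non-congruent frameworks with
corresponding bar lengths the same, then `p - q` is a non-trivial infinitesimal flex
of `(G, (p + q)/2)`. -/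
theorem stmt3 {n d : ℕ} (G : SimpleGraph (Fin n))
    (p q : Fin n → EuclideanSpace ℝ (Fin d))
    (hlen : ∀ i j, G.Adj i j → ‖p i - p j‖ = ‖q i - q j‖)
    (hnoncong : ¬ (∀ i j, ‖p i - p j‖ = ‖q i - q j‖)) :
    ∃ i j, ⟪((1 : ℝ) / 2) • (p i + q i) - ((1 : ℝ) / 2) • (p j + q j),
        (p i - q i) - (p j - q j)⟫ ≠ 0 := by
  by_contra h
  push_neg at h
  apply hnoncong
  intro i j
  have key := h i j
  set a := p i - p j with ha
  set b := q i - q j with hb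
  clear_value a b
  have h1 : ((1 : ℝ) / 2) • (p i + q i) - ((1 : ℝ) / 2) • (p j + q j)
      = ((1 : ℝ) / 2) • (a + b) := by
    rw [ha, hb]; module
  have h2 : (p i - q i) - (p j - q j) = a - b := by
    rw [ha, hb]; abel
  rw [h1, h2, real_inner_smul_left, inner_add_left, inner_sub_right,
    inner_sub_right, real_inner_self_eq_norm_sq, real_inner_self_eq_norm_sq,
    real_inner_comm b a] at key
  have : ‖a‖ ^ 2 = ‖b‖ ^ 2 := by nlinarith [key]
  nlinarith [norm_nonneg a, norm_nonneg b, sq_nonneg (‖a‖ - ‖b‖), sq_nonneg (‖a‖ + ‖b‖)]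
end

section
/- Let f, g : ℝ → ℝ be non-decreasing piecewise-constant (step) functions, and suppose there exist positive reals l and C such that f(x+l) = f(x) + C and g(x+l) = g(x) + C for all x ∈ ℝ, and that f(x) ∈ [0,C) and g(x) ∈ [0,C) for all x ∈ [0,l). Then there exists a constant α ∈ ℝ such that |f(x) - g(x) - α| < C/2 for all x ∈ ℝ. -/
/-!
On one period, `f - g` varies by less than `C`: for `x ≤ y` in `[0, l)`,
`(f y - g y) - (f x - g x) ≤ f y - f x < C` because `g` is monotone, and symmetrically for
`y ≤ x`. Being a difference of step functions, `f - g` takes finitely many values on a period,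
so its maximum `M` and minimum `m` there are attained and `M - m < C`. As `f - g` is
`l`-periodic, `α = (M + m) / 2` works on all of `ℝ`.
-/

open Set

theorem sub_sub_sub_lt_of_monotone {α : Type*} [LinearOrder α] {f g : α → ℝ}
    (hf : Monotone f) (hg : Monotone g) {s : Set α} {C : ℝ}
    (hfs : ∀ x ∈ s, f x ∈ Ico 0 C) (hgs : ∀ x ∈ s, g x ∈ Ico 0 C)
    {x y : α} (hx : x ∈ s) (hy : y ∈ s) : (f x - g x) - (f y - g y) < C := by
  obtain ⟨hfx, hfx'⟩ := hfs x hx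
  obtain ⟨hfy, hfy'⟩ := hfs y hy
  obtain ⟨hgx, hgx'⟩ := hgs x hx
  obtain ⟨hgy, hgy'⟩ := hgs y hy
  rcases le_total x y with hxy | hyx
  · linarith [hf hxy]
  · linarith [hg hyx]

theorem Set.Finite.exists_forall_abs_sub_lt_half {s : Set ℝ} (hs : s.Finite)
    (hne : s.Nonempty) {C : ℝ} (hC : ∀ x ∈ s, ∀ y ∈ s, x - y < C) :
    ∃ α, ∀ z ∈ s, |z - α| < C / 2 := by
  obtain ⟨M, hM, hMmax⟩ := hs.isCompact.exists_isGreatest hne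
  obtain ⟨m, hm, hmmin⟩ := hs.isCompact.exists_isLeast hne
  have hMm := hC M hM m hm
  refine ⟨(M + m) / 2, fun z hz => abs_lt.2 ⟨?_, ?_⟩⟩
  · linarith [hmmin hz]
  · linarith [hMmax hz]

theorem stmt4_general (f g : ℝ → ℝ) (l C : ℝ) (hl : 0 < l)
    (hfmono : Monotone f) (hgmono : Monotone g)
    (hffin : (f '' Set.Ico 0 l).Finite) (hgfin : (g '' Set.Ico 0 l).Finite)
    (hfper : ∀ x, f (x + l) = f x + C) (hgper : ∀ x, g (x + l) = g x + C)
    (hfrange : ∀ x ∈ Set.Ico (0 : ℝ) l, f x ∈ Set.Ico 0 C)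
    (hgrange : ∀ x ∈ Set.Ico (0 : ℝ) l, g x ∈ Set.Ico 0 C) :
    ∃ α : ℝ, ∀ x, |f x - g x - α| < C / 2 := by
  set h : ℝ → ℝ := fun x => f x - g x
  have hper : Function.Periodic h l := fun x => by
    simp only [h, hfper, hgper]
    ring
  have hfin : (h '' Ico 0 l).Finite := (hffin.image2 (· - ·) hgfin).subset <| by
    rintro _ ⟨x, hx, rfl⟩
    exact mem_image2_of_mem (mem_image_of_mem f hx) (mem_image_of_mem g hx)
  obtain ⟨α, hα⟩ := hfin.exists_forall_abs_sub_lt_half (image_nonempty.2 ⟨0, le_rfl, hl⟩) <| by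
    rintro _ ⟨x, hx, rfl⟩ _ ⟨y, hy, rfl⟩
    exact sub_sub_sub_lt_of_monotone hfmono hgmono hfrange hgrange hx hy
  refine ⟨α, fun x => hα _ ?_⟩
  obtain ⟨y, hy, hxy⟩ := hper.exists_mem_Ico₀ hl x
  exact ⟨y, hy, hxy.symm⟩

/-- If `f, g : ℝ → ℝ` are monotone step functions with
`f(x + l) = f(x) + C`, `g(x + l) = g(x) + C` and taking values in `[0, C)` on `[0, l)`,
then there is a constant `α` with `|f(x) - g(x) - α| < C/2` for all `x`. -/
theorem stmt4 (f g : ℝ → ℝ) (l C : ℝ) (hl : 0 < l) (hC : 0 < C)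
    (hfmono : Monotone f) (hgmono : Monotone g)
    (hfusc : UpperSemicontinuous f) (hgusc : UpperSemicontinuous g)
    (hffin : (f '' Set.Ico 0 l).Finite) (hgfin : (g '' Set.Ico 0 l).Finite)
    (hfper : ∀ x, f (x + l) = f x + C) (hgper : ∀ x, g (x + l) = g x + C)
    (hfrange : ∀ x ∈ Set.Ico (0 : ℝ) l, f x ∈ Set.Ico 0 C)
    (hgrange : ∀ x ∈ Set.Ico (0 : ℝ) l, g x ∈ Set.Ico 0 C) :
    ∃ α : ℝ, ∀ x, |f x - g x - α| < C / 2 :=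
  stmt4_general f g l C hl hfmono hgmono hffin hgfin hfper hgper hfrange hgrange
end

section
/- Given real numbers a > 0, m > 0, δ > 0 with δ < a, and ω < 0, there exists a differentiable, positive, strictly decreasing function g : (0,∞) → ℝ such that g(a) = 1/m, g'(a) = ω, and g(a-δ) > 1. -/
/-!
Take `g x = exp (φ (x - a)) / m` with `φ t = m ω t - (m / δ³) t³`. Since `m ω < 0`, `φ` is
strictly decreasing, and `φ 0 = 0`, `φ' 0 = m ω` give `g a = 1 / m` and `g' a = ω`. The cubic
term does not affect the derivative at `a` but lifts `φ (-δ)` above `m`, so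
`g (a - δ) > exp m / m > 1`.
-/

open Real

lemma strictAnti_mul_sub_mul_pow_three {s K : ℝ} (hs : s < 0) (hK : 0 ≤ K) :
    StrictAnti fun t : ℝ => s * t - K * t ^ 3 := by
  intro x y hxy
  have hcube : x ^ 3 ≤ y ^ 3 := (Odd.strictMono_pow (by decide : Odd 3)).monotone hxy.le
  nlinarith [mul_le_mul_of_nonneg_left hcube hK]

lemma hasDerivAt_mul_sub_mul_pow_three (s K x : ℝ) :
    HasDerivAt (fun t : ℝ => s * t - K * t ^ 3) (s - K * (3 * x ^ 2)) x :=
  (((hasDerivAt_id' x).const_mul s).fun_sub ((hasDerivAt_pow 3 x).const_mul K)).congr_deriv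
    (by norm_num)

theorem stmt8_general (a m δ ω : ℝ) (hm : 0 < m) (hδ : 0 < δ)
    (hω : ω < 0) :
    ∃ g : ℝ → ℝ,
      (∀ x ∈ Set.Ioi (0 : ℝ), DifferentiableWithinAt ℝ g (Set.Ioi 0) x) ∧
      (∀ x ∈ Set.Ioi (0 : ℝ), 0 < g x) ∧
      StrictAntiOn g (Set.Ioi 0) ∧
      g a = 1 / m ∧
      HasDerivAt g ω a ∧
      1 < g (a - δ) := by
  set φ : ℝ → ℝ := fun t => m * ω * t - m / δ ^ 3 * t ^ 3 with hφ
  have hφ_anti : StrictAnti φ :=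
    strictAnti_mul_sub_mul_pow_three (mul_neg_of_pos_of_neg hm hω) (by positivity)
  have hg_deriv (x : ℝ) : HasDerivAt (fun x => exp (φ (x - a)) / m)
      (exp (φ (x - a)) * (m * ω - m / δ ^ 3 * (3 * (x - a) ^ 2)) / m) x := by
    have hφ_shift := (hasDerivAt_mul_sub_mul_pow_three (m * ω) (m / δ ^ 3) (x - a)).comp x
      ((hasDerivAt_id x).sub_const a)
    simpa using hφ_shift.exp.div_const m
  have hg_anti : StrictAnti fun x => exp (φ (x - a)) / m := fun x y h =>
    div_lt_div_of_pos_right (exp_lt_exp.2 (hφ_anti (sub_lt_sub_right h a))) hm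
  refine ⟨fun x => exp (φ (x - a)) / m, fun x _ => (hg_deriv x).differentiableAt.differentiableWithinAt,
    fun x _ => by positivity, hg_anti.strictAntiOn _, by simp [hφ], ?_, ?_⟩
  · convert hg_deriv a using 1
    field_simp
    simp [hφ]
  · have hφ_δ : φ (a - δ - a) = m - m * ω * δ := by
      simp only [hφ, sub_sub_cancel_left]
      field_simp
      ring
    have hmωδ : m * ω * δ < 0 := mul_neg_of_neg_of_pos (mul_neg_of_pos_of_neg hm hω) hδ
    rw [one_lt_div hm]
    linarith [add_one_lt_exp (x := φ (a - δ - a)) (by linarith)]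

/-- Given `a, m, δ > 0` with `δ < a` and `ω < 0`, there is a
differentiable, positive, strictly decreasing function `g` on `(0, ∞)` with
`g(a) = 1/m`, `g'(a) = ω` and `g(a - δ) > 1`. -/
theorem stmt8 (a m δ ω : ℝ) (ha : 0 < a) (hm : 0 < m) (hδ : 0 < δ) (hδa : δ < a)
    (hω : ω < 0) :
    ∃ g : ℝ → ℝ,
      (∀ x ∈ Set.Ioi (0 : ℝ), DifferentiableWithinAt ℝ g (Set.Ioi 0) x) ∧
      (∀ x ∈ Set.Ioi (0 : ℝ), 0 < g x) ∧
      StrictAntiOn g (Set.Ioi 0) ∧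
      g a = 1 / m ∧
      HasDerivAt g ω a ∧
      1 < g (a - δ) :=
  stmt8_general a m δ ω hm hδ hω
end

section
/- Let (G,p) be a strictly convex braced polygon in the plane and suppose ω is a non-zero equilibrium stress of (G,p) that is non-positive on all interior braces. Then ω is strictly positive on every boundary edge of the polygon (and hence it is a proper stress once every interior brace carrying non-zero stress is negative). -/
open scoped RealInnerProductSpace

/-- The plane. -/
abbrev Pt : Type := EuclideanSpace ℝ (Fin 2)

/-- The points `p 0, p 1, …, p (n-1)` form a strictly convex polygon in this cyclic
order: every vertex is exposed (some line meets the polygon only at that vertex), and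
all other vertices lie strictly on one side of the line through each boundary edge
`{i, i+1}`. -/
def IsStrictlyConvexPolygon (n : ℕ) (p : ZMod n → Pt) : Prop :=
  (∀ i : ZMod n, ∃ f : Pt →L[ℝ] ℝ, ∀ j : ZMod n, j ≠ i → f (p j) < f (p i)) ∧
  (∀ i : ZMod n, ∃ f : Pt →L[ℝ] ℝ, f (p i) = f (p (i + 1)) ∧
      ∀ j : ZMod n, j ≠ i → j ≠ i + 1 → f (p j) < f (p i))

/-- Let `(G, p)` be a strictly convex braced polygon in the plane
(the graph `G` on the cyclically ordered vertices contains all boundary edges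
`{i, i+1}`) and let `ω` be a non-zero equilibrium stress of `(G, p)` that is
non-positive on all interior braces.  Then `ω` is strictly positive on every boundary
edge. -/
theorem stmt10 (n : ℕ) [NeZero n] (hn : 3 ≤ n) (G : SimpleGraph (ZMod n))
    (hbdry : ∀ i : ZMod n, G.Adj i (i + 1))
    (p : ZMod n → Pt) (hconv : IsStrictlyConvexPolygon n p)
    (ω : ZMod n → ZMod n → ℝ)
    (hsym : ∀ i j, ω i j = ω j i)
    (hsupp : ∀ i j, ¬ G.Adj i j → ω i j = 0)
    (hequil : ∀ i, ∑ j, ω i j • (p i - p j) = 0)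
    (hnz : ω ≠ 0)
    (hbrace : ∀ i j, G.Adj i j → j ≠ i + 1 → i ≠ j + 1 → ω i j ≤ 0) :
    ∀ i : ZMod n, 0 < ω i (i + 1) := by
  obtain ⟨hvert, hedge⟩ := hconv
  have h1 : (1 : ZMod n) ≠ 0 := by
    intro h
    have : n ∣ 1 := by
      have := (ZMod.natCast_eq_zero_iff 1 n).mp (by exact_mod_cast h)
      exact this
    have := Nat.le_of_dvd one_pos this
    omega
  have h2 : (2 : ZMod n) ≠ 0 := by
    intro h
    have : n ∣ 2 := by
      have := (ZMod.natCast_eq_zero_iff 2 n).mp (by exact_mod_cast h)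
      exact this
    have := Nat.le_of_dvd two_pos this
    omega
  -- Key lemma from the edge functional of edge {i, i+1} at vertex i.
  have key : ∀ i : ZMod n,
      0 ≤ ω i (i - 1) ∧
      (ω i (i - 1) = 0 → ∀ j, j ≠ i → j ≠ i + 1 → j ≠ i - 1 → ω i j = 0) := by
    intro i
    obtain ⟨f, hf1, hf2⟩ := hedge i
    have hne1 : i ≠ i + 1 := fun h => h1 (by linear_combination -h)
    have hne2 : i ≠ i - 1 := fun h => h1 (by linear_combination h)
    have hne3 : (i + 1) ≠ i - 1 := fun h => h2 (by linear_combination h)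
    have heq : ∑ j, ω i j * (f (p i) - f (p j)) = 0 := by
      have h0 := congrArg f (hequil i)
      simpa [map_sum, map_smul, map_sub, smul_eq_mul] using h0
    set s : Finset (ZMod n) := {i, i + 1, i - 1} with hs
    have hsum_s : ∑ j ∈ s, ω i j * (f (p i) - f (p j))
        = ω i (i - 1) * (f (p i) - f (p (i - 1))) := by
      rw [hs]
      rw [Finset.sum_insert (by simp [hne1, hne2]),
        Finset.sum_insert (by simp [hne3]), Finset.sum_singleton]
      rw [hf1]
      ring
    have hsplit := Finset.sum_sdiff (Finset.subset_univ s)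
      (f := fun j => ω i j * (f (p i) - f (p j)))
    rw [heq, hsum_s] at hsplit
    have hterms : ∀ j ∈ Finset.univ \ s, ω i j * (f (p i) - f (p j)) ≤ 0 := by
      intro j hj
      simp only [hs, Finset.mem_sdiff, Finset.mem_univ, Finset.mem_insert,
        Finset.mem_singleton, true_and, not_or] at hj
      obtain ⟨hji, hji1, hjim⟩ := hj
      have hc : 0 < f (p i) - f (p j) := sub_pos.mpr (hf2 j hji hji1)
      have hω : ω i j ≤ 0 := by
        by_cases hadj : G.Adj i j
        · exact hbrace i j hadj hji1 (fun h => hjim (by rw [h]; ring))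
        · exact le_of_eq (hsupp i j hadj)
      exact mul_nonpos_iff.mpr (Or.inr ⟨hω, hc.le⟩)
    have hcm : 0 < f (p i) - f (p (i - 1)) :=
      sub_pos.mpr (hf2 (i - 1) (Ne.symm hne2) (Ne.symm hne3))
    have hsle : ∑ j ∈ Finset.univ \ s, ω i j * (f (p i) - f (p j)) ≤ 0 :=
      Finset.sum_nonpos hterms
    constructor
    · by_contra hneg
      push_neg at hneg
      have : ω i (i - 1) * (f (p i) - f (p (i - 1))) < 0 :=
        mul_neg_of_neg_of_pos hneg hcm
      linarith
    · intro h0 j hji hji1 hjim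
      have hzero : ∑ j ∈ Finset.univ \ s, ω i j * (f (p i) - f (p j)) = 0 := by
        rw [h0] at hsplit; linarith
      have hmem : j ∈ Finset.univ \ s := by
        simp [hs, hji, hji1, hjim]
      have := (Finset.sum_eq_zero_iff_of_nonpos hterms).mp hzero j hmem
      rcases mul_eq_zero.mp this with h | h
      · exact h
      · have hc : 0 < f (p i) - f (p j) := sub_pos.mpr (hf2 j hji hji1)
        linarith
  -- Propagation: vanishing of the previous boundary stress forces the next one to vanish.
  have prop : ∀ i : ZMod n, ω i (i - 1) = 0 → ω i (i + 1) = 0 := by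
    intro i h0
    have hne1 : i ≠ i + 1 := fun h => h1 (by linear_combination -h)
    have hz := (key i).2 h0
    have heq : ω i (i + 1) • (p i - p (i + 1)) = 0 := by
      have := hequil i
      rwa [Finset.sum_eq_single (i + 1) (fun j _ hji1 => ?_) (by simp)] at this
      by_cases hji : j = i
      · simp [hji]
      · by_cases hjim : j = i - 1
        · rw [hjim, h0, zero_smul]
        · rw [hz j hji hji1 hjim, zero_smul]
    have hpne : p i - p (i + 1) ≠ 0 := by
      obtain ⟨f, hf⟩ := hvert i
      intro h
      have := hf (i + 1) (Ne.symm hne1)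
      rw [sub_eq_zero.mp h] at this
      exact lt_irrefl _ this
    rcases smul_eq_zero.mp heq with h | h
    · exact h
    · exact absurd h hpne
  intro i
  rcases lt_or_eq_of_le ((key (i + 1)).1.trans_eq
      (by rw [add_sub_cancel_right, ← hsym])) with h | h
  · exact h
  · exfalso
    set i0 := i + 1 with hi0
    have h0 : ω i0 (i0 - 1) = 0 := by
      rw [add_sub_cancel_right, ← hsym, ← h]
    have hall : ∀ k : ℕ, ω (i0 + k) (i0 + k - 1) = 0 := by
      intro k
      induction k with
      | zero => simpa using h0
      | succ k ih =>
        have hnext := prop _ ih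
        have : ((k : ZMod n) + 1) = ((k + 1 : ℕ) : ZMod n) := by push_cast; ring
        calc ω (i0 + (k + 1 : ℕ)) (i0 + (k + 1 : ℕ) - 1)
            = ω (i0 + k + 1) (i0 + k) := by rw [← this]; ring_nf
          _ = ω (i0 + k) (i0 + k + 1) := (hsym _ _).symm
          _ = 0 := hnext
    have hbd : ∀ j : ZMod n, ω j (j - 1) = 0 := by
      intro j
      have hcast : i0 + (((j - i0).val : ℕ) : ZMod n) = j := by
        rw [ZMod.natCast_val, ZMod.cast_id]; ring
      have := hall ((j - i0).val)
      rwa [hcast] at this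
    apply hnz
    funext a b
    by_cases hab : G.Adj a b
    · by_cases hb1 : b = a + 1
      · rw [hb1, hsym]
        have := hbd (a + 1)
        rwa [add_sub_cancel_right] at this
      · by_cases ha1 : a = b + 1
        · rw [ha1]
          have := hbd (b + 1)
          rwa [add_sub_cancel_right] at this
        · have hba : b ≠ a - 1 := fun h => ha1 (by rw [h]; ring)
          exact (key a).2 (hbd a) b hab.ne' hb1 hba
    · exact hsupp a b hab
end

section
/- Let G be a minimally 3-connected braced polygon graph, (G,p) a strictly convex realisation in the plane, and ω a non-zero equilibrium stress of (G,p) that is non-positive on the interior braces. Then ω is a proper stress (positive on boundary edges, negative on all braces), and the space of equilibrium stresses of (G,p) is one-dimensional. -/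
open scoped RealInnerProductSpace

/-- A boundary edge of the `n`-gon: an edge of the form `{i, i+1}`. -/
def IsBoundaryEdge (n : ℕ) (e : Sym2 (ZMod n)) : Prop := ∃ i : ZMod n, e = s(i, i + 1)

/-- The braced polygon graph on the cyclically ordered vertex set `ZMod n`:
the boundary Hamilton cycle `{i, i+1}` together with the set `B` of braces. -/
def bpGraph (n : ℕ) (B : Finset (Sym2 (ZMod n))) : SimpleGraph (ZMod n) :=
  SimpleGraph.fromEdgeSet ((↑B : Set (Sym2 (ZMod n))) ∪ {e | IsBoundaryEdge n e})

/-- A graph is 3-connected if it has at least 4 vertices and deleting any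
at most 2 vertices leaves it connected. -/
def ThreeConnected {V : Type*} [Fintype V] (G : SimpleGraph V) : Prop :=
  4 ≤ Fintype.card V ∧
    ∀ s : Finset V, s.card ≤ 2 → (G.induce ((↑s : Set V)ᶜ)).Connected

/-- A braced polygon graph is minimally 3-connected if it is 3-connected and
deleting any brace destroys 3-connectivity. -/
def MinThreeConnectedBP (n : ℕ) [NeZero n] (B : Finset (Sym2 (ZMod n))) : Prop :=
  ThreeConnected (bpGraph n B) ∧ ∀ e ∈ B, ¬ ThreeConnected (bpGraph n (B.erase e))

/-- An equilibrium stress of the framework `(G, p)`. -/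
def IsEquilibriumStress {n : ℕ} [NeZero n] (G : SimpleGraph (ZMod n))
    (p : ZMod n → Pt) (ω : ZMod n → ZMod n → ℝ) : Prop :=
  (∀ i j, ω i j = ω j i) ∧ (∀ i j, ¬ G.Adj i j → ω i j = 0) ∧
    (∀ i, ∑ j, ω i j • (p i - p j) = 0)

namespace St11

variable {n : ℕ} [NeZero n]

/-! ### ZMod helpers -/

lemma cast_val (z : ZMod n) : ((z.val : ℕ) : ZMod n) = z := ZMod.natCast_rightInverse z

lemma val_cast {m : ℕ} (h : m < n) : ((m : ℕ) : ZMod n).val = m := ZMod.val_cast_of_lt h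

lemma pos_add (a : ZMod n) {m : ℕ} (h : m < n) : (a + (m : ZMod n) - a).val = m := by
  rw [show a + (m : ZMod n) - a = (m : ZMod n) by ring, val_cast h]

lemma eq_base_add (a z : ZMod n) : z = a + (((z - a).val : ℕ) : ZMod n) := by
  rw [cast_val]; ring

lemma eq_iff_pos {a z w : ZMod n} : z = w ↔ (z - a).val = (w - a).val := by
  constructor
  · rintro rfl; rfl
  · intro h
    have h1 := eq_base_add a z
    have h2 := eq_base_add a w
    rw [h1, h2, h]

lemma eq_iff_posval {a z : ZMod n} {m : ℕ} (hm : m < n) : z = a + (m : ZMod n) ↔ (z - a).val = m := by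
  rw [eq_iff_pos (a := a), pos_add a hm]

lemma pos_lt (a z : ZMod n) : (z - a).val < n := ZMod.val_lt _

lemma pos_eq_zero {a z : ZMod n} : (z - a).val = 0 ↔ z = a := by
  rw [ZMod.val_eq_zero, sub_eq_zero]

lemma one_ne_zero' (hn : 2 ≤ n) : (1 : ZMod n) ≠ 0 := by
  intro h
  have : ((1:ℕ) : ZMod n).val = (0 : ZMod n).val := by rw [Nat.cast_one, h]
  rw [val_cast (by omega), ZMod.val_zero] at this
  omega

lemma add_one_ne (hn : 2 ≤ n) (a : ZMod n) : a + 1 ≠ a := by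
  intro h
  exact one_ne_zero' hn (by linear_combination h - a)

lemma sub_one_ne (hn : 2 ≤ n) (a : ZMod n) : a - 1 ≠ a := by
  intro h
  exact one_ne_zero' hn (by linear_combination a - h)

lemma val_sub_rev {x y : ZMod n} (h : x ≠ y) : (x - y).val = n - (y - x).val := by
  have h1 : y - x ≠ 0 := sub_ne_zero.mpr (Ne.symm h)
  have := ZMod.neg_val (y - x)
  rw [if_neg h1] at this
  rw [show x - y = -(y - x) by ring, this]

/-! ### Graph helpers -/

lemma bp_adj {B : Finset (Sym2 (ZMod n))} {i j : ZMod n} :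
    (bpGraph n B).Adj i j ↔ (s(i,j) ∈ B ∨ IsBoundaryEdge n s(i,j)) ∧ i ≠ j := by
  rw [bpGraph, SimpleGraph.fromEdgeSet_adj]
  simp only [Set.mem_union, Finset.mem_coe, Set.mem_setOf_eq]

lemma boundary_iff {i j : ZMod n} : IsBoundaryEdge n s(i,j) ↔ j = i + 1 ∨ i = j + 1 := by
  constructor
  · rintro ⟨k, hk⟩
    rw [Sym2.eq_iff] at hk
    rcases hk with ⟨rfl, rfl⟩ | ⟨rfl, rfl⟩
    · left; rfl
    · right; rfl
  · rintro (rfl | rfl)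
    · exact ⟨i, rfl⟩
    · exact ⟨j, Sym2.eq_swap⟩

section Stress

variable {B : Finset (Sym2 (ZMod n))} {p : ZMod n → Pt} {σ : ZMod n → ZMod n → ℝ}

lemma sigma_diag (hs : IsEquilibriumStress (bpGraph n B) p σ) (i : ZMod n) : σ i i = 0 :=
  hs.2.1 i i (SimpleGraph.irrefl _)

/-- non-positivity off the two boundary neighbours -/
lemma sigma_nonpos (hs : IsEquilibriumStress (bpGraph n B) p σ)
    (hble : ∀ i j : ZMod n, s(i, j) ∈ B → σ i j ≤ 0)
    {i j : ZMod n} (h1 : j ≠ i + 1) (h2 : i ≠ j + 1) : σ i j ≤ 0 := by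
  by_cases hb : s(i,j) ∈ B
  · exact hble i j hb
  · refine le_of_eq (hs.2.1 i j ?_)
    rw [bp_adj]
    rintro ⟨hor | hbd, -⟩
    · exact hb hor
    · rcases boundary_iff.mp hbd with h | h
      · exact h1 h
      · exact h2 h

/-- applying a linear functional to the equilibrium condition -/
lemma T1 (hs : IsEquilibriumStress (bpGraph n B) p σ) (f : Pt →L[ℝ] ℝ) (i : ZMod n) :
    ∑ j, σ i j * (f (p i) - f (p j)) = 0 := by
  have h := hs.2.2 i
  have : ∑ j, σ i j * (f (p i) - f (p j)) = f (∑ j, σ i j • (p i - p j)) := by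
    rw [map_sum]
    refine Finset.sum_congr rfl fun j _ => ?_
    rw [map_smul, map_sub]
    simp [smul_eq_mul]
  rw [this, h, map_zero]

end Stress

end St11

namespace St11

variable {n : ℕ} [NeZero n]
variable {B : Finset (Sym2 (ZMod n))} {p : ZMod n → Pt} {σ : ZMod n → ZMod n → ℝ}

lemma sub_one_ne_add_one (hn : 4 ≤ n) (a : ZMod n) : a - 1 ≠ a + 1 := by
  intro h
  have h2 : ((2:ℕ) : ZMod n) = 0 := by push_cast; linear_combination -h
  have := val_cast (n := n) (m := 2) (by omega)
  rw [h2, ZMod.val_zero] at this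
  omega

/-- Key step: at each vertex `i`, using the supporting functional of edge `(i, i+1)`. -/
lemma step (hn : 4 ≤ n) (hconv : IsStrictlyConvexPolygon n p)
    (hs : IsEquilibriumStress (bpGraph n B) p σ)
    (hble : ∀ i j : ZMod n, s(i, j) ∈ B → σ i j ≤ 0) (i : ZMod n) :
    0 ≤ σ i (i-1) ∧
      (σ i (i-1) = 0 → ∀ j, j ≠ i - 1 → j ≠ i → j ≠ i + 1 → σ i j = 0) := by
  obtain ⟨f, hf1, hf2⟩ := hconv.2 i
  have hT := T1 hs f i
  set t : ZMod n → ℝ := fun j => σ i j * (f (p i) - f (p j)) with ht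
  have e1 : t i = 0 := by simp [ht, sigma_diag hs]
  have e2 : t (i+1) = 0 := by simp [ht, hf1]
  set R : Finset (ZMod n) := ((Finset.univ.erase i).erase (i+1)).erase (i-1) with hR
  have hmem : (i-1) ∈ (Finset.univ.erase i).erase (i+1) := by
    rw [Finset.mem_erase, Finset.mem_erase]
    exact ⟨sub_one_ne_add_one hn i, sub_one_ne (by omega) i, Finset.mem_univ _⟩
  have hsplit : t (i-1) + ∑ j ∈ R, t j = 0 := by
    rw [hR, Finset.add_sum_erase _ t hmem, Finset.sum_erase _ e2, Finset.sum_erase _ e1]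
    exact hT
  have hrest : ∀ j ∈ R, t j ≤ 0 := by
    intro j hj
    rw [hR, Finset.mem_erase, Finset.mem_erase, Finset.mem_erase] at hj
    obtain ⟨hj1, hj2, hj3, -⟩ := hj
    have hσ : σ i j ≤ 0 := by
      refine sigma_nonpos hs hble hj2 fun h => hj1 ?_
      rw [h]; ring
    have hfac : f (p j) < f (p i) := hf2 j hj3 hj2
    have : σ i j * (f (p i) - f (p j)) ≤ 0 :=
      mul_nonpos_iff.mpr (Or.inr ⟨hσ, by linarith⟩)
    exact this
  have hsum : ∑ j ∈ R, t j ≤ 0 := Finset.sum_nonpos hrest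
  have htpos : 0 ≤ t (i-1) := by linarith
  have hfac1 : f (p (i-1)) < f (p i) :=
    hf2 (i-1) (sub_one_ne (by omega) i) (sub_one_ne_add_one hn i)
  have htpos' : 0 ≤ σ i (i-1) * (f (p i) - f (p (i-1))) := htpos
  constructor
  · by_contra hneg
    push_neg at hneg
    nlinarith [mul_pos (neg_pos.mpr hneg) (sub_pos.mpr hfac1)]
  · intro h0 j hj1 hj2 hj3
    have ht0 : t (i-1) = 0 := by rw [ht]; simp [h0]
    have hzero : ∀ j ∈ R, t j = 0 := by
      intro j hj
      have : ∑ j ∈ R, t j = 0 := by linarith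
      exact (Finset.sum_eq_zero_iff_of_nonpos hrest).mp this j hj
    have hjR : j ∈ R := by
      rw [hR, Finset.mem_erase, Finset.mem_erase, Finset.mem_erase]
      exact ⟨hj1, hj3, hj2, Finset.mem_univ _⟩
    have := hzero j hjR
    rw [ht] at this
    rcases mul_eq_zero.mp this with h | h
    · exact h
    · exfalso
      have := hf2 j hj2 hj3
      linarith

/-- The Proposition: a nonzero equilibrium stress non-positive on braces is
positive on all boundary edges. -/
lemma boundary_pos (hn : 4 ≤ n) (hconv : IsStrictlyConvexPolygon n p)
    (hs : IsEquilibriumStress (bpGraph n B) p σ) (hnz : σ ≠ 0)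
    (hble : ∀ i j : ZMod n, s(i, j) ∈ B → σ i j ≤ 0) :
    ∀ i : ZMod n, 0 < σ i (i+1) := by
  have hstep := step hn hconv hs hble
  by_cases hex : ∃ i₀ : ZMod n, σ i₀ (i₀ - 1) = 0
  · exfalso
    obtain ⟨i₀, h0⟩ := hex
    have key : ∀ k : ℕ, σ (i₀ + (k : ZMod n)) ((i₀ + (k : ZMod n)) - 1) = 0 := by
      intro k
      induction k with
      | zero => simpa using h0
      | succ k ih =>
        set a : ZMod n := i₀ + (k : ZMod n) with ha
        obtain ⟨g, hg⟩ := hconv.1 a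
        have hT := T1 hs g a
        have hzs := (hstep a).2 ih
        have hsingle : ∑ j, σ a j * (g (p a) - g (p j)) =
            σ a (a+1) * (g (p a) - g (p (a+1))) := by
          refine Finset.sum_eq_single (a+1) ?_ ?_
          · intro j _ hj
            by_cases h1 : j = a
            · rw [h1, sigma_diag hs]; ring
            by_cases h2 : j = a - 1
            · rw [h2, ih]; ring
            · rw [hzs j h2 h1 hj]; ring
          · intro h; exact absurd (Finset.mem_univ _) h
        rw [hsingle] at hT
        have hfac : g (p (a+1)) < g (p a) := hg _ (add_one_ne (by omega) a)
        have hz : σ a (a+1) = 0 := by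
          rcases mul_eq_zero.mp hT with h | h
          · exact h
          · exfalso; linarith
        have e : i₀ + (((k+1 : ℕ)) : ZMod n) = a + 1 := by push_cast; rw [ha]; ring
        rw [e, show a + 1 - 1 = a by ring, hs.1]
        exact hz
    have hall : ∀ i : ZMod n, σ i (i - 1) = 0 := by
      intro i
      have := key (i - i₀).val
      rwa [← eq_base_add i₀ i] at this
    apply hnz
    funext i j
    simp only [Pi.zero_apply]
    by_cases hj1 : j = i - 1
    · rw [hj1]; exact hall i
    by_cases hj2 : j = i + 1
    · have := hall (i+1)
      rw [show (i+1) - 1 = i by ring] at this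
      rw [hj2, hs.1]
      exact this
    by_cases hj3 : j = i
    · rw [hj3]; exact sigma_diag hs i
    · exact (hstep i).2 (hall i) j hj1 hj3 hj2
  · push_neg at hex
    intro i
    have h1 := (hstep (i+1)).1
    have h2 := hex (i+1)
    have : 0 < σ (i+1) ((i+1) - 1) := lt_of_le_of_ne h1 (Ne.symm h2)
    rwa [show (i+1) - 1 = i by ring, ← hs.1] at this

end St11
namespace St11

variable {n : ℕ} [NeZero n]
variable {B : Finset (Sym2 (ZMod n))} {p : ZMod n → Pt} {σ : ZMod n → ZMod n → ℝ}

def A1set (u : ZMod n) (κ : ℕ) : Finset (ZMod n) :=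
  Finset.univ.filter (fun z => 0 < (z-u).val ∧ (z-u).val < κ)

def A2set (u : ZMod n) (κ : ℕ) : Finset (ZMod n) :=
  Finset.univ.filter (fun z => κ < (z-u).val)

lemma mem_A1set {u z : ZMod n} {κ : ℕ} :
    z ∈ A1set u κ ↔ 0 < (z-u).val ∧ (z-u).val < κ := by simp [A1set]

lemma mem_A2set {u z : ZMod n} {κ : ℕ} : z ∈ A2set u κ ↔ κ < (z-u).val := by simp [A2set]

lemma split_univ {κ : ℕ} (hκ0 : 0 < κ) (hκn : κ < n) (u : ZMod n) (g : ZMod n → ℝ) :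
    ∑ j, g j = g u + g (u + (κ : ZMod n))
      + (∑ j ∈ A1set u κ, g j) + ∑ j ∈ A2set u κ, g j := by
  have hv : ((u + (κ:ZMod n)) - u).val = κ := pos_add u hκn
  have h00 : (u - u).val = 0 := by rw [sub_self, ZMod.val_zero]
  have hdis : Disjoint (A1set u κ) (A2set u κ) := by
    rw [Finset.disjoint_left]
    intro z h1 h2
    rw [mem_A1set] at h1; rw [mem_A2set] at h2; omega
  have hu1 : u ∉ insert (u + (κ:ZMod n)) (A1set u κ ∪ A2set u κ) := by
    simp only [Finset.mem_insert, Finset.mem_union, mem_A1set, mem_A2set, h00]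
    push_neg
    refine ⟨fun h => ?_, by omega, by omega⟩
    have h2 := hv
    rw [← h] at h2
    rw [h00] at h2
    omega
  have hv1 : (u + (κ:ZMod n)) ∉ A1set u κ ∪ A2set u κ := by
    simp only [Finset.mem_union, mem_A1set, mem_A2set, hv]
    omega
  have huniv : (Finset.univ : Finset (ZMod n)) =
      insert u (insert (u+(κ:ZMod n)) (A1set u κ ∪ A2set u κ)) := by
    ext z
    simp only [Finset.mem_univ, true_iff, Finset.mem_insert, Finset.mem_union, mem_A1set,
      mem_A2set]
    by_cases h0 : z = u
    · exact Or.inl h0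
    refine Or.inr ?_
    by_cases hk : z = u + (κ:ZMod n)
    · exact Or.inl hk
    refine Or.inr ?_
    have hz0 : (z-u).val ≠ 0 := fun h => h0 (pos_eq_zero.mp h)
    have hzκ : (z-u).val ≠ κ := fun h => hk ((eq_iff_posval hκn).mpr h)
    have := pos_lt u z
    omega
  rw [huniv, Finset.sum_insert hu1, Finset.sum_insert hv1, Finset.sum_union hdis]
  ring

lemma sum_antisym (s : Finset (ZMod n)) (F : ZMod n → ZMod n → ℝ)
    (h : ∀ i j, F i j + F j i = 0) : ∑ i ∈ s, ∑ j ∈ s, F i j = 0 := by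
  have hcomm : ∑ i ∈ s, ∑ j ∈ s, F j i = ∑ i ∈ s, ∑ j ∈ s, F i j := Finset.sum_comm
  have h2 : (∑ i ∈ s, ∑ j ∈ s, F i j) + ∑ i ∈ s, ∑ j ∈ s, F j i = 0 := by
    rw [← Finset.sum_add_distrib]
    simp_rw [← Finset.sum_add_distrib]
    exact Finset.sum_eq_zero fun i _ => Finset.sum_eq_zero fun j _ => h i j
  linarith

lemma arc_sum {u : ZMod n} {κ : ℕ} (hκ0 : 0 < κ) (hκn : κ < n)
    (hσ : ∀ i j, σ i j = σ j i)
    (hcross0 : ∀ i ∈ A1set u κ, ∀ j ∈ A2set u κ, σ i j = 0)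
    (W : ZMod n → ZMod n → ℝ)
    (hanti : ∀ i j, W i j + W j i = 0)
    (hW0 : ∀ i ∈ A1set u κ, ∑ j, σ i j * W i j = 0) :
    (∑ i ∈ A1set u κ, σ i u * W i u)
      + ∑ i ∈ A1set u κ, σ i (u+(κ:ZMod n)) * W i (u+(κ:ZMod n)) = 0 := by
  have h0 : ∑ i ∈ A1set u κ, ∑ j, σ i j * W i j = 0 := Finset.sum_eq_zero hW0
  have h1 : ∀ i ∈ A1set u κ, ∑ j, σ i j * W i j =
      σ i u * W i u + σ i (u+(κ:ZMod n)) * W i (u+(κ:ZMod n))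
        + (∑ j ∈ A1set u κ, σ i j * W i j) + ∑ j ∈ A2set u κ, σ i j * W i j :=
    fun i _ => split_univ hκ0 hκn u _
  rw [Finset.sum_congr rfl h1, Finset.sum_add_distrib, Finset.sum_add_distrib,
    Finset.sum_add_distrib] at h0
  have h2 : ∑ i ∈ A1set u κ, ∑ j ∈ A1set u κ, σ i j * W i j = 0 := by
    apply sum_antisym
    intro i j
    rw [hσ j i]
    linear_combination σ i j * (hanti i j)
  have h3 : ∑ i ∈ A1set u κ, ∑ j ∈ A2set u κ, σ i j * W i j = 0 :=
    Finset.sum_eq_zero fun i hi => Finset.sum_eq_zero fun j hj => by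
      rw [hcross0 i hi j hj]; ring
  rw [h2, h3] at h0
  linarith

lemma clm_rep (f : Pt →L[ℝ] ℝ) (x y : Pt) :
    f x - f y = (x 0 - y 0) * f (EuclideanSpace.single 0 1)
      + (x 1 - y 1) * f (EuclideanSpace.single 1 1) := by
  have hx : ∀ z : Pt, f z = z 0 * f (EuclideanSpace.single 0 1)
      + z 1 * f (EuclideanSpace.single 1 1) := by
    intro z
    have hz : z = z 0 • EuclideanSpace.single 0 1 + z 1 • EuclideanSpace.single 1 (1:ℝ) := by
      ext i; fin_cases i <;> simp [EuclideanSpace.single_apply]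
    rw [show f z = f (z 0 • EuclideanSpace.single 0 1 + z 1 • EuclideanSpace.single 1 (1:ℝ))
      from by rw [← hz]]
    rw [map_add, map_smul, map_smul]
    simp [smul_eq_mul]
  rw [hx x, hx y]; ring

end St11
namespace St11

variable {n : ℕ} [NeZero n]
variable {B : Finset (Sym2 (ZMod n))} {p : ZMod n → Pt} {σ : ZMod n → ZMod n → ℝ}

lemma arc_lemma (hn : 4 ≤ n) (hconv : IsStrictlyConvexPolygon n p)
    (hs : IsEquilibriumStress (bpGraph n B) p σ)
    (hble : ∀ i j : ZMod n, s(i, j) ∈ B → σ i j ≤ 0)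
    (u : ZMod n) (κ : ℕ) (hκ2 : 2 ≤ κ) (hκn : κ + 2 ≤ n)
    (hcross : ∀ i j : ZMod n, 0 < (i-u).val → (i-u).val < κ → κ < (j-u).val → σ i j = 0) :
    ∃ t : ℝ, t ≤ 0 ∧
      (∀ c : Fin 2, ∑ i ∈ A1set u κ, σ i (u + (κ:ZMod n)) * (p i c - p (u + (κ:ZMod n)) c)
          = t * (p u c - p (u + (κ:ZMod n)) c)) ∧
      (∀ c : Fin 2, ∑ i ∈ A1set u κ, σ i u * (p i c - p u c)
          = -(t * (p u c - p (u + (κ:ZMod n)) c))) ∧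
      (t = 0 → (∀ i ∈ A1set u κ, i ≠ (u + (κ:ZMod n)) - 1 → σ i (u + (κ:ZMod n)) = 0)
             ∧ (∀ i ∈ A1set u κ, i ≠ u + 1 → σ i u = 0)) := by
  set v : ZMod n := u + (κ:ZMod n) with hvdef
  have hκ0 : 0 < κ := by omega
  have hκn' : κ < n := by omega
  have h1v : (1 : ZMod n).val = 1 := by
    rw [show (1 : ZMod n) = ((1:ℕ) : ZMod n) by push_cast; rfl, val_cast (by omega)]
  have hvval : (v - u).val = κ := pos_add u hκn'
  have huv : u ≠ v := by
    intro h; rw [← h, sub_self, ZMod.val_zero] at hvval; omega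
  have hA1v : ∀ i ∈ A1set u κ, i ≠ v := by
    intro i hi h; rw [mem_A1set] at hi; rw [h, hvval] at hi; omega
  have hA1u : ∀ i ∈ A1set u κ, i ≠ u := by
    intro i hi h; rw [mem_A1set] at hi
    rw [h, sub_self, ZMod.val_zero] at hi; omega
  have hvp1 : (v + 1 - u).val = κ + 1 := by
    rw [show v + 1 - u = ((κ + 1 : ℕ) : ZMod n) by push_cast; rw [hvdef]; ring]
    exact val_cast (by omega)
  have hA1vp1 : ∀ i ∈ A1set u κ, i ≠ v + 1 := by
    intro i hi h; rw [mem_A1set] at hi; rw [h, hvp1] at hi; omega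
  have hum1 : (u - 1 - u).val = n - 1 := by
    rw [show u - 1 - u = -(1 : ZMod n) by ring, ZMod.neg_val,
      if_neg (one_ne_zero' (by omega : 2 ≤ n)), h1v]
  have hA1um1 : ∀ i ∈ A1set u κ, i ≠ u - 1 := by
    intro i hi h; rw [mem_A1set] at hi; rw [h, hum1] at hi; omega
  have hvm1A1 : v - 1 ∈ A1set u κ := by
    rw [mem_A1set, show v - 1 - u = ((κ - 1 : ℕ) : ZMod n) by
      rw [Nat.cast_sub (by omega : 1 ≤ κ)]; rw [hvdef]; push_cast; ring,
      val_cast (by omega)]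
    omega
  have hunevm1 : u ≠ v - 1 := by
    intro h; exact hA1u (v-1) hvm1A1 h.symm
  have hvneup1 : v ≠ u + 1 := by
    intro h
    have h2 : (v - u).val = 1 := by
      rw [h, show u + 1 - u = (1 : ZMod n) by ring, h1v]
    omega
  have hσv : ∀ i ∈ A1set u κ, i ≠ v - 1 → σ i v ≤ 0 := by
    intro i hi hne
    refine sigma_nonpos hs hble (fun h => hne (by rw [h]; ring)) (hA1vp1 i hi)
  have hσu : ∀ i ∈ A1set u κ, i ≠ u + 1 → σ i u ≤ 0 := by
    intro i hi hne
    refine sigma_nonpos hs hble ?_ hne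
    intro h
    exact hA1um1 i hi (by rw [h]; ring)
  have hcross0 : ∀ i ∈ A1set u κ, ∀ j ∈ A2set u κ, σ i j = 0 := by
    intro i hi j hj; rw [mem_A1set] at hi; rw [mem_A2set] at hj
    exact hcross i j hi.1 hi.2 hj
  have hT1c : ∀ (c : Fin 2) (i : ZMod n), ∑ j, σ i j * (p i c - p j c) = 0 := by
    intro c i
    simpa using T1 hs (EuclideanSpace.proj c) i
  -- F1 : total force balance
  have hF1 : ∀ c : Fin 2,
      (∑ i ∈ A1set u κ, σ i u * (p i c - p u c))
        + ∑ i ∈ A1set u κ, σ i v * (p i c - p v c) = 0 := by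
    intro c
    exact arc_sum hκ0 hκn' hs.1 hcross0 (fun i j => p i c - p j c) (fun i j => by ring)
      (fun i _ => hT1c c i)
  -- F2 : moment balance
  have hMom : ∑ i ∈ A1set u κ, σ i v *
      ((p i 0 - p u 0) * (p i 1 - p v 1) - (p i 1 - p u 1) * (p i 0 - p v 0)) = 0 := by
    have hW0 : ∀ i ∈ A1set u κ, ∑ j, σ i j *
        ((p i 0 - p u 0) * (p i 1 - p j 1) - (p i 1 - p u 1) * (p i 0 - p j 0)) = 0 := by
      intro i _
      have h0 := hT1c 0 i
      have h1 := hT1c 1 i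
      have expand : ∑ j, σ i j *
          ((p i 0 - p u 0) * (p i 1 - p j 1) - (p i 1 - p u 1) * (p i 0 - p j 0))
          = (p i 0 - p u 0) * (∑ j, σ i j * (p i 1 - p j 1))
            - (p i 1 - p u 1) * (∑ j, σ i j * (p i 0 - p j 0)) := by
        rw [Finset.mul_sum, Finset.mul_sum, ← Finset.sum_sub_distrib]
        exact Finset.sum_congr rfl fun j _ => by ring
      rw [expand, h0, h1]; ring
    have hAS := arc_sum hκ0 hκn' hs.1 hcross0
      (fun i j => (p i 0 - p u 0) * (p i 1 - p j 1) - (p i 1 - p u 1) * (p i 0 - p j 0))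
      (fun i j => by ring) hW0
    have hz : ∑ i ∈ A1set u κ, σ i u *
        ((p i 0 - p u 0) * (p i 1 - p u 1) - (p i 1 - p u 1) * (p i 0 - p u 0)) = 0 :=
      Finset.sum_eq_zero fun i _ => by ring
    rw [hz] at hAS
    linarith
  set α : ℝ := p u 0 - p v 0 with hα
  set β : ℝ := p u 1 - p v 1 with hβ
  set Xv0 : ℝ := ∑ i ∈ A1set u κ, σ i v * (p i 0 - p v 0) with hXv0
  set Xv1 : ℝ := ∑ i ∈ A1set u κ, σ i v * (p i 1 - p v 1) with hXv1
  have hrel : Xv0 * β - Xv1 * α = 0 := by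
    have e : Xv0 * β - Xv1 * α = ∑ i ∈ A1set u κ, σ i v *
        ((p i 0 - p u 0) * (p i 1 - p v 1) - (p i 1 - p u 1) * (p i 0 - p v 0)) := by
      rw [hXv0, hXv1, Finset.sum_mul, Finset.sum_mul, ← Finset.sum_sub_distrib]
      exact Finset.sum_congr rfl fun i _ => by rw [hα, hβ]; ring
    rw [e]; exact hMom
  have hne : ¬(α = 0 ∧ β = 0) := by
    rintro ⟨ha, hb⟩
    obtain ⟨f, hf⟩ := hconv.1 u
    have c0 : p v 0 = p u 0 := by rw [hα] at ha; linarith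
    have c1 : p v 1 = p u 1 := by rw [hβ] at hb; linarith
    have hpv : p v = p u := by ext c; fin_cases c; exacts [c0, c1]
    have := hf v (Ne.symm huv)
    rw [hpv] at this
    exact lt_irrefl _ this
  obtain ⟨t, ht0, ht1⟩ : ∃ t : ℝ, Xv0 = t * α ∧ Xv1 = t * β := by
    by_cases hα0 : α = 0
    · have hβ0 : β ≠ 0 := fun h => hne ⟨hα0, h⟩
      refine ⟨Xv1 / β, ?_, by field_simp⟩
      rw [hα0, mul_zero]
      rw [hα0, mul_zero, sub_zero] at hrel
      exact (mul_eq_zero.mp hrel).resolve_right hβ0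
    · refine ⟨Xv0 / α, by field_simp, ?_⟩
      rw [div_mul_eq_mul_div, eq_div_iff hα0]
      linarith
  -- sign analysis at v
  obtain ⟨f, hfeq, hflt⟩ := hconv.2 (v - 1)
  simp only [show v - 1 + 1 = v from by ring] at hfeq hflt
  have hterm : ∀ i ∈ A1set u κ, 0 ≤ σ i v * (f (p i) - f (p v)) := by
    intro i hi
    by_cases hie : i = v - 1
    · rw [hie, hfeq, sub_self, mul_zero]
    · have h1 : σ i v ≤ 0 := hσv i hi hie
      have h2 : f (p i) < f (p v) := by
        rw [← hfeq]; exact hflt i hie (hA1v i hi)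
      have h3 : σ i v * (f (p i) - f (p v)) = (-σ i v) * (f (p v) - f (p i)) := by ring
      rw [h3]
      exact mul_nonneg (by linarith) (by linarith)
  have hZnn : 0 ≤ ∑ i ∈ A1set u κ, σ i v * (f (p i) - f (p v)) :=
    Finset.sum_nonneg hterm
  have hZt : ∑ i ∈ A1set u κ, σ i v * (f (p i) - f (p v)) = t * (f (p u) - f (p v)) := by
    have e1 : ∑ i ∈ A1set u κ, σ i v * (f (p i) - f (p v))
        = Xv0 * f (EuclideanSpace.single 0 1) + Xv1 * f (EuclideanSpace.single 1 1) := by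
      rw [hXv0, hXv1, Finset.sum_mul, Finset.sum_mul, ← Finset.sum_add_distrib]
      exact Finset.sum_congr rfl fun i _ => by rw [clm_rep f (p i) (p v)]; ring
    rw [e1, ht0, ht1, clm_rep f (p u) (p v), hα, hβ]; ring
  have hfu : f (p u) - f (p v) < 0 := by
    have := hflt u hunevm1 huv
    rw [← hfeq]; linarith
  have ht : t ≤ 0 := by nlinarith
  have hXu0 : ∑ i ∈ A1set u κ, σ i u * (p i 0 - p u 0) = -(t * α) := by
    have h := hF1 0
    rw [← hXv0, ht0] at h
    linarith
  have hXu1 : ∑ i ∈ A1set u κ, σ i u * (p i 1 - p u 1) = -(t * β) := by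
    have h := hF1 1
    rw [← hXv1, ht1] at h
    linarith
  refine ⟨t, ht, ?_, ?_, ?_⟩
  · intro c; fin_cases c; exacts [ht0, ht1]
  · intro c; fin_cases c; exacts [hXu0, hXu1]
  · intro htz
    constructor
    · intro i hi hine
      have hZ0 : ∑ i ∈ A1set u κ, σ i v * (f (p i) - f (p v)) = 0 := by
        rw [hZt, htz, zero_mul]
      have := (Finset.sum_eq_zero_iff_of_nonneg hterm).mp hZ0 i hi
      rcases mul_eq_zero.mp this with h | h
      · exact h
      · exfalso
        have h2 : f (p i) < f (p v) := by
          rw [← hfeq]; exact hflt i hine (hA1v i hi)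
        linarith
    · -- u side
      obtain ⟨g, hgeq, hglt⟩ := hconv.2 u
      have hterm' : ∀ i ∈ A1set u κ, 0 ≤ σ i u * (g (p i) - g (p u)) := by
        intro i hi
        by_cases hie : i = u + 1
        · rw [hie, ← hgeq, sub_self, mul_zero]
        · have h1 : σ i u ≤ 0 := hσu i hi hie
          have h2 : g (p i) < g (p u) := hglt i (hA1u i hi) hie
          have h3 : σ i u * (g (p i) - g (p u)) = (-σ i u) * (g (p u) - g (p i)) := by ring
          rw [h3]
          exact mul_nonneg (by linarith) (by linarith)
      have hZ't : ∑ i ∈ A1set u κ, σ i u * (g (p i) - g (p u))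
          = -(t * (g (p u) - g (p v))) := by
        have e1 : ∑ i ∈ A1set u κ, σ i u * (g (p i) - g (p u))
            = (∑ i ∈ A1set u κ, σ i u * (p i 0 - p u 0)) * g (EuclideanSpace.single 0 1)
              + (∑ i ∈ A1set u κ, σ i u * (p i 1 - p u 1)) * g (EuclideanSpace.single 1 1) := by
          rw [Finset.sum_mul, Finset.sum_mul, ← Finset.sum_add_distrib]
          exact Finset.sum_congr rfl fun i _ => by rw [clm_rep g (p i) (p u)]; ring
        rw [e1, hXu0, hXu1, clm_rep g (p u) (p v), hα, hβ]; ring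
      intro i hi hine
      have hZ'0 : ∑ i ∈ A1set u κ, σ i u * (g (p i) - g (p u)) = 0 := by
        rw [hZ't, htz, zero_mul, neg_zero]
      have := (Finset.sum_eq_zero_iff_of_nonneg hterm').mp hZ'0 i hi
      rcases mul_eq_zero.mp this with h | h
      · exact h
      · exfalso
        have h2 : g (p i) < g (p u) := hglt i (hA1u i hi) hine
        linarith

end St11
namespace St11

variable {n : ℕ} [NeZero n]
variable {B : Finset (Sym2 (ZMod n))} {p : ZMod n → Pt} {σ : ZMod n → ZMod n → ℝ}

lemma A2_eq_A1 {u : ZMod n} {κ : ℕ} (hκ0 : 0 < κ) (hκn : κ < n) :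
    A2set u κ = A1set (u + (κ:ZMod n)) (n - κ) := by
  ext z
  rw [mem_A2set, mem_A1set]
  set m := (z - u).val with hm
  have hmn : m < n := pos_lt u z
  have hzm : z - u = (m : ZMod n) := (cast_val (z-u)).symm
  have hsub : z - (u + (κ:ZMod n)) = (z - u) - (κ:ZMod n) := by ring
  by_cases h : κ ≤ m
  · have e : z - (u + (κ:ZMod n)) = ((m - κ : ℕ) : ZMod n) := by
      rw [Nat.cast_sub h, hsub, hzm]
    rw [e, val_cast (by omega)]
    omega
  · push_neg at h
    have e : z - (u + (κ:ZMod n)) = ((n - (κ - m) : ℕ) : ZMod n) := by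
      rw [hsub, hzm, Nat.cast_sub (by omega : κ - m ≤ n), Nat.cast_sub (by omega : m ≤ κ),
        ZMod.natCast_self]
      ring
    rw [e, val_cast (by omega)]
    omega

lemma cut_false (hn : 4 ≤ n) (hconv : IsStrictlyConvexPolygon n p)
    (hs : IsEquilibriumStress (bpGraph n B) p σ) (hnz : σ ≠ 0)
    (hble : ∀ i j : ZMod n, s(i, j) ∈ B → σ i j ≤ 0)
    (u : ZMod n) (κ : ℕ) (hκ2 : 2 ≤ κ) (hκn : κ + 2 ≤ n)
    (hcross : ∀ i j : ZMod n, 0 < (i-u).val → (i-u).val < κ → κ < (j-u).val → σ i j = 0) :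
    False := by
  have hpos := boundary_pos hn hconv hs hnz hble
  set v : ZMod n := u + (κ:ZMod n) with hvdef
  have hκ0 : 0 < κ := by omega
  have hκn' : κ < n := by omega
  have h1v : (1 : ZMod n).val = 1 := by
    rw [show (1 : ZMod n) = ((1:ℕ) : ZMod n) by push_cast; rfl, val_cast (by omega)]
  have hvval : (v - u).val = κ := pos_add u hκn'
  have huv : u ≠ v := by
    intro h; rw [← h, sub_self, ZMod.val_zero] at hvval; omega
  have hum1 : (u - 1 - u).val = n - 1 := by
    rw [show u - 1 - u = -(1 : ZMod n) by ring, ZMod.neg_val,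
      if_neg (one_ne_zero' (by omega : 2 ≤ n)), h1v]
  have hvu : v + ((n - κ : ℕ) : ZMod n) = u := by
    rw [hvdef, Nat.cast_sub (le_of_lt hκn'), ZMod.natCast_self]
    ring
  -- crossing hypothesis for the complementary arc
  have hcross' : ∀ i j : ZMod n, 0 < (i-v).val → (i-v).val < n - κ →
      n - κ < (j-v).val → σ i j = 0 := by
    intro i j h1 h2 h3
    set m := (i - v).val with hm
    set r := (j - v).val with hr
    have hrn : r < n := pos_lt v j
    have hiv : i - v = ((m:ℕ) : ZMod n) := (cast_val (i-v)).symm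
    have hjv : j - v = ((r:ℕ) : ZMod n) := (cast_val (j-v)).symm
    have hiu : (i - u).val = m + κ := by
      have e : i - u = ((m + κ : ℕ) : ZMod n) := by
        push_cast
        linear_combination hiv + hvdef
      rw [e, val_cast (by omega)]
    have hju : (j - u).val = r + κ - n := by
      have e : j - u = ((r + κ - n : ℕ) : ZMod n) := by
        rw [Nat.cast_sub (by omega : n ≤ r + κ), ZMod.natCast_self]
        push_cast
        linear_combination hjv + hvdef
      rw [e, val_cast (by omega)]
    rw [hs.1]
    exact hcross j i (by omega) (by omega) (by omega)
  obtain ⟨t, ht, hXv, hXu, hteq⟩ := arc_lemma hn hconv hs hble u κ hκ2 hκn hcross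
  obtain ⟨s, hst, hXv', hXu', hseq⟩ :=
    arc_lemma hn hconv hs hble v (n-κ) (by omega) (by omega) hcross'
  rw [hvu] at hXv' hXu' hseq
  have hT1c : ∀ (c : Fin 2) (i : ZMod n), ∑ j, σ i j * (p i c - p j c) = 0 := by
    intro c i
    simpa using T1 hs (EuclideanSpace.proj c) i
  -- equilibrium at v in coordinates
  have hEq : ∀ c : Fin 2, (σ v u + t + s) * (p v c - p u c) = 0 := by
    intro c
    have h0' : σ v u * (p v c - p u c) + σ v v * (p v c - p v c)
        + (∑ j ∈ A1set u κ, σ v j * (p v c - p j c))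
        + (∑ j ∈ A2set u κ, σ v j * (p v c - p j c)) = 0 :=
      (split_univ hκ0 hκn' u (fun j => σ v j * (p v c - p j c))).symm.trans (hT1c c v)
    have e2 : ∑ j ∈ A1set u κ, σ v j * (p v c - p j c) = -(t * (p u c - p v c)) := by
      calc ∑ j ∈ A1set u κ, σ v j * (p v c - p j c)
          = ∑ j ∈ A1set u κ, -(σ j v * (p j c - p v c)) :=
            Finset.sum_congr rfl fun j _ => by rw [hs.1 v j]; ring
        _ = -(∑ j ∈ A1set u κ, σ j v * (p j c - p v c)) := by
            rw [← Finset.sum_neg_distrib]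
        _ = -(t * (p u c - p v c)) := by rw [hXv c]
    have e3 : ∑ j ∈ A2set u κ, σ v j * (p v c - p j c) = s * (p v c - p u c) := by
      rw [A2_eq_A1 hκ0 hκn']
      calc ∑ j ∈ A1set v (n-κ), σ v j * (p v c - p j c)
          = ∑ j ∈ A1set v (n-κ), -(σ j v * (p j c - p v c)) :=
            Finset.sum_congr rfl fun j _ => by rw [hs.1 v j]; ring
        _ = -(∑ j ∈ A1set v (n-κ), σ j v * (p j c - p v c)) := by
            rw [← Finset.sum_neg_distrib]
        _ = s * (p v c - p u c) := by rw [hXu' c]; ring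
    rw [e2, e3] at h0'
    have e1 : σ v v * (p v c - p v c) = 0 := by rw [sub_self, mul_zero]
    rw [e1] at h0'
    linear_combination h0'
  have hpuv : ∃ c : Fin 2, p v c - p u c ≠ 0 := by
    by_contra h
    push_neg at h
    have c0 := h 0
    have c1 := h 1
    obtain ⟨f, hf⟩ := hconv.1 u
    have hrep := clm_rep f (p v) (p u)
    rw [c0, c1, zero_mul, zero_mul, add_zero] at hrep
    have h2 := hf v (Ne.symm huv)
    linarith
  have hsum0 : σ v u + t + s = 0 := by
    obtain ⟨c, hc⟩ := hpuv
    exact (mul_eq_zero.mp (hEq c)).resolve_right hc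
  have hσvu : σ v u ≤ 0 := by
    refine sigma_nonpos hs hble ?_ ?_
    · intro h
      have h2 : (v + 1 - u).val = κ + 1 := by
        rw [show v + 1 - u = ((κ + 1 : ℕ) : ZMod n) by push_cast; rw [hvdef]; ring]
        exact val_cast (by omega)
      rw [← h, sub_self, ZMod.val_zero] at h2
      omega
    · intro h
      have h2 : (v - u).val = 1 := by
        rw [h, show u + 1 - u = (1:ZMod n) by ring, h1v]
      omega
  have htz : t = 0 := by linarith
  have hsz : s = 0 := by linarith
  have hσvu0 : σ v u = 0 := by linarith
  obtain ⟨-, hv2⟩ := hteq htz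
  obtain ⟨hv1', -⟩ := hseq hsz
  -- final contradiction at u
  obtain ⟨f, hf⟩ := hconv.1 u
  have hT := T1 hs f u
  have hpair_ne : u + 1 ≠ u - 1 := by
    intro h
    have h1 : (u + 1 - u).val = 1 := by rw [show u + 1 - u = (1:ZMod n) by ring, h1v]
    rw [h, hum1] at h1
    omega
  have hzero : ∀ j ∈ (Finset.univ : Finset (ZMod n)),
      j ∉ ({u+1, u-1} : Finset (ZMod n)) → σ u j * (f (p u) - f (p j)) = 0 := by
    intro j _ hj
    simp only [Finset.mem_insert, Finset.mem_singleton] at hj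
    push_neg at hj
    obtain ⟨hj1, hj2⟩ := hj
    by_cases h0 : j = u
    · rw [h0, sub_self, mul_zero]
    by_cases hvj : j = v
    · rw [hvj, hs.1 u v, hσvu0, zero_mul]
    have hm0 : (j - u).val ≠ 0 := fun h => h0 (pos_eq_zero.mp h)
    have hmκ : (j - u).val ≠ κ := fun h => hvj ((eq_iff_posval hκn').mpr h)
    by_cases hlt : (j - u).val < κ
    · have hjA : j ∈ A1set u κ := mem_A1set.mpr ⟨by omega, hlt⟩
      rw [hs.1 u j, hv2 j hjA hj1, zero_mul]
    · have hjA : j ∈ A1set (u + (κ:ZMod n)) (n - κ) := by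
        rw [← A2_eq_A1 hκ0 hκn', mem_A2set]
        omega
      rw [hs.1 u j, hv1' j hjA hj2, zero_mul]
  have hps : ∑ j ∈ ({u+1, u-1} : Finset (ZMod n)), σ u j * (f (p u) - f (p j)) = 0 := by
    rw [Finset.sum_subset (Finset.subset_univ _) hzero]
    exact hT
  rw [Finset.sum_pair hpair_ne] at hps
  have hp1 : 0 < σ u (u+1) := hpos u
  have hp2 : 0 < σ u (u-1) := by
    have h2 := hpos (u-1)
    rw [show u - 1 + 1 = u from by ring] at h2
    rw [hs.1]
    exact h2
  have hf1 : f (p (u+1)) < f (p u) := hf _ (add_one_ne (by omega) u)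
  have hf2 : f (p (u-1)) < f (p u) := hf _ (sub_one_ne (by omega) u)
  nlinarith [mul_pos hp1 (sub_pos.mpr hf1), mul_pos hp2 (sub_pos.mpr hf2)]

end St11
namespace St11

variable {n : ℕ} [NeZero n]
variable {B : Finset (Sym2 (ZMod n))} {p : ZMod n → Pt} {σ : ZMod n → ZMod n → ℝ}

lemma add_val_sub (w z : ZMod n) : w + (((z - w).val : ℕ) : ZMod n) = z := by
  rw [cast_val]; ring

lemma bp_adj_boundary (hn : 2 ≤ n) (B' : Finset (Sym2 (ZMod n))) (a : ZMod n) :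
    (bpGraph n B').Adj a (a+1) := by
  rw [bp_adj]
  exact ⟨Or.inr ⟨a, rfl⟩, Ne.symm (Ne.symm (add_one_ne hn a)).symm⟩

lemma walk_arc (hn : 4 ≤ n) (B' : Finset (Sym2 (ZMod n))) (S : Set (ZMod n)) :
    ∀ (k : ℕ) (a : ZMod n), (∀ m : ℕ, m ≤ k → a + (m : ZMod n) ∈ S) →
    ∀ (ha : a ∈ S) (hak : a + (k : ZMod n) ∈ S),
    ((bpGraph n B').induce S).Reachable ⟨a, ha⟩ ⟨a + (k : ZMod n), hak⟩ := by
  intro k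
  induction k with
  | zero =>
    intro a hall ha hak
    have e : (⟨a + ((0:ℕ) : ZMod n), hak⟩ : S) = ⟨a, ha⟩ := Subtype.ext (by push_cast; ring)
    rw [e]
  | succ k ih =>
    intro a hall ha hak
    have hmid : a + (k : ZMod n) ∈ S := hall k (by omega)
    have h1 := ih a (fun m hm => hall m (by omega)) ha hmid
    refine h1.trans ?_
    have hadj : (bpGraph n B').Adj (a + (k:ZMod n)) (a + ((k+1:ℕ):ZMod n)) := by
      have e : a + ((k+1:ℕ):ZMod n) = (a + (k:ZMod n)) + 1 := by push_cast; ring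
      rw [e]
      exact bp_adj_boundary (by omega) _ _
    have hadjI : ((bpGraph n B').induce S).Adj ⟨a + (k:ZMod n), hmid⟩
        ⟨a + ((k+1:ℕ):ZMod n), hak⟩ := by simpa using hadj
    exact hadjI.reachable

lemma arc_reach_le (hn : 4 ≤ n) (B' : Finset (Sym2 (ZMod n))) (S : Set (ZMod n))
    (w : ZMod n) (M : ℕ)
    (hS : ∀ z : ZMod n, 0 < (z - w).val → (z - w).val < M → z ∈ S)
    (x y : ZMod n) (hx : 0 < (x-w).val) (hx2 : (x-w).val < M)
    (hy : 0 < (y-w).val) (hy2 : (y-w).val < M) (hM : M ≤ n)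
    (hle : (x-w).val ≤ (y-w).val) :
    ((bpGraph n B').induce S).Reachable ⟨x, hS x hx hx2⟩ ⟨y, hS y hy hy2⟩ := by
  set k : ℕ := (y-w).val - (x-w).val with hkdef
  have hval : ∀ m : ℕ, m ≤ k → (x + (m:ZMod n) - w).val = (x-w).val + m := by
    intro m hm
    have e : x + (m:ZMod n) - w = (((x-w).val + m : ℕ) : ZMod n) := by
      push_cast
      rw [cast_val]
      ring
    rw [e, val_cast (by omega)]
  have hall : ∀ m : ℕ, m ≤ k → x + (m:ZMod n) ∈ S := by
    intro m hm
    exact hS _ (by rw [hval m hm]; omega) (by rw [hval m hm]; omega)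
  have hend : x + (k : ZMod n) = y := by
    have e1 : x + ((k:ℕ) : ZMod n) = w + (((x-w).val + k : ℕ) : ZMod n) := by
      push_cast
      rw [cast_val]
      ring
    rw [e1, show (x-w).val + k = (y-w).val by omega, add_val_sub]
  have hr := walk_arc hn B' S k x hall (hS x hx hx2) (by rw [hend]; exact hS y hy hy2)
  have e : (⟨x + (k:ZMod n), by rw [hend]; exact hS y hy hy2⟩ : S) = ⟨y, hS y hy hy2⟩ :=
    Subtype.ext hend
  rwa [e] at hr

lemma arc_reach (hn : 4 ≤ n) (B' : Finset (Sym2 (ZMod n))) (S : Set (ZMod n))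
    (w : ZMod n) (M : ℕ)
    (hS : ∀ z : ZMod n, 0 < (z - w).val → (z - w).val < M → z ∈ S)
    (x y : ZMod n) (hx : 0 < (x-w).val) (hx2 : (x-w).val < M)
    (hy : 0 < (y-w).val) (hy2 : (y-w).val < M) (hM : M ≤ n) :
    ((bpGraph n B').induce S).Reachable ⟨x, hS x hx hx2⟩ ⟨y, hS y hy hy2⟩ := by
  rcases le_total (x-w).val (y-w).val with h | h
  · exact arc_reach_le hn B' S w M hS x y hx hx2 hy hy2 hM h
  · exact (arc_reach_le hn B' S w M hS y x hy hy2 hx hx2 hM h).symm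

lemma build_threeconn (hn : 4 ≤ n) (hconv : IsStrictlyConvexPolygon n p)
    (hs : IsEquilibriumStress (bpGraph n B) p σ) (hnz : σ ≠ 0)
    (hble : ∀ i j : ZMod n, s(i, j) ∈ B → σ i j ≤ 0)
    (B' : Finset (Sym2 (ZMod n)))
    (hB' : ∀ i j : ZMod n, σ i j ≠ 0 → (bpGraph n B').Adj i j) :
    ThreeConnected (bpGraph n B') := by
  constructor
  · rw [ZMod.card]; exact hn
  intro sF hcard
  rw [SimpleGraph.connected_iff]
  have hmemS : ∀ z : ZMod n, z ∉ sF → z ∈ ((↑sF : Set (ZMod n))ᶜ) := fun z hz => by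
    simp [hz]
  have hSmem : ∀ z : ZMod n, z ∈ ((↑sF : Set (ZMod n))ᶜ) → z ∉ sF := fun z hz => by
    simpa using hz
  have hnonempty : ∃ x : ZMod n, x ∉ sF := by
    by_contra h
    push_neg at h
    have hsub : Finset.univ ⊆ sF := fun x _ => h x
    have := Finset.card_le_card hsub
    rw [Finset.card_univ, ZMod.card] at this
    omega
  refine ⟨?_, ?_⟩
  swap
  · obtain ⟨x, hx⟩ := hnonempty
    exact ⟨⟨x, hmemS x hx⟩⟩
  rintro ⟨x, hx⟩ ⟨y, hy⟩
  by_cases hxy : x = y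
  · subst hxy
    exact SimpleGraph.Reachable.refl _
  set S : Set (ZMod n) := (↑sF : Set (ZMod n))ᶜ with hSdef
  set k : ℕ := (y - x).val with hk
  have hk0 : 0 < k := by
    rcases Nat.eq_zero_or_pos k with h | h
    · exact (hxy (pos_eq_zero.mp h).symm).elim
    · exact h
  have hkn : k < n := pos_lt x y
  have hyx : x + (k : ZMod n) = y := add_val_sub x y
  by_cases hfwd : ∀ m : ℕ, 0 < m → m < k → x + (m:ZMod n) ∉ sF
  · -- walk forward from x to y
    have hall : ∀ m : ℕ, m ≤ k → x + (m:ZMod n) ∈ S := by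
      intro m hm
      rcases Nat.eq_zero_or_pos m with h0 | h0
      · subst h0; simpa using hx
      rcases eq_or_lt_of_le hm with he | hlt
      · subst he; rw [hyx]; exact hy
      · exact hmemS _ (hfwd m h0 hlt)
    have hr := walk_arc hn B' S k x hall hx (by rw [hyx]; exact hy)
    have e : (⟨x + (k:ZMod n), by rw [hyx]; exact hy⟩ : S) = ⟨y, hy⟩ := Subtype.ext hyx
    rwa [e] at hr
  by_cases hbwd : ∀ m : ℕ, 0 < m → m < n - k → y + (m:ZMod n) ∉ sF
  · -- walk forward from y to x
    have hxyval : (x - y).val = n - k := val_sub_rev hxy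
    have hxy' : y + ((n - k : ℕ) : ZMod n) = x := by
      rw [show ((n-k:ℕ) : ZMod n) = ((x - y).val : ZMod n) by rw [hxyval], add_val_sub]
    have hall : ∀ m : ℕ, m ≤ n - k → y + (m:ZMod n) ∈ S := by
      intro m hm
      rcases Nat.eq_zero_or_pos m with h0 | h0
      · subst h0; simpa using hy
      rcases eq_or_lt_of_le hm with he | hlt
      · subst he; rw [hxy']; exact hx
      · exact hmemS _ (hbwd m h0 hlt)
    have hr := walk_arc hn B' S (n-k) y hall hy (by rw [hxy']; exact hx)
    have e : (⟨y + ((n-k:ℕ):ZMod n), by rw [hxy']; exact hx⟩ : S) = ⟨x, hx⟩ :=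
      Subtype.ext hxy'
    rw [e] at hr
    exact hr.symm
  -- both directions blocked: a genuine 2-cut {u, v}
  push_neg at hfwd hbwd
  obtain ⟨m₁, hm₁0, hm₁k, hw₁⟩ := hfwd
  obtain ⟨m₂, hm₂0, hm₂k, hw₂⟩ := hbwd
  set u : ZMod n := x + (m₁ : ZMod n) with hu
  set vv : ZMod n := y + (m₂ : ZMod n) with hvv
  have hux : (u - x).val = m₁ := pos_add x (by omega)
  have hvx : (vv - x).val = k + m₂ := by
    have e : vv - x = ((k + m₂ : ℕ) : ZMod n) := by
      rw [hvv, ← hyx]; push_cast; ring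
    rw [e, val_cast (by omega)]
  have huvv : u ≠ vv := by
    intro h
    rw [eq_iff_pos (a := x), hux, hvx] at h
    omega
  have hsF : sF = {u, vv} := by
    have hsub : ({u, vv} : Finset (ZMod n)) ⊆ sF := by
      intro z hz
      simp only [Finset.mem_insert, Finset.mem_singleton] at hz
      rcases hz with rfl | rfl
      · exact hw₁
      · exact hw₂
    have hc2 : ({u, vv} : Finset (ZMod n)).card = 2 := by
      rw [Finset.card_insert_of_notMem (by simpa using huvv), Finset.card_singleton]
    exact (Finset.eq_of_subset_of_card_le hsub (by omega)).symm
  set κ : ℕ := k + m₂ - m₁ with hκ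
  have hκval : (vv - u).val = κ := by
    have e : vv - u = ((κ : ℕ) : ZMod n) := by
      rw [hκ, Nat.cast_sub (by omega), hvv, hu, ← hyx]; push_cast; ring
    rw [e, val_cast (by omega)]
  have hκ2 : 2 ≤ κ := by omega
  have hκn : κ + 2 ≤ n := by omega
  have huval : (u - vv).val = n - κ := by
    rw [val_sub_rev huvv, hκval]
  -- a crossing edge with nonzero stress exists
  have hex : ¬ (∀ i j : ZMod n, 0 < (i-u).val → (i-u).val < κ → κ < (j-u).val →
      σ i j = 0) := fun hcr => cut_false hn hconv hs hnz hble u κ hκ2 hκn hcr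
  push_neg at hex
  obtain ⟨a, b, ha1, ha2, hb1, hσab⟩ := hex
  have hbn : (b - u).val < n := pos_lt u b
  have hadj : (bpGraph n B').Adj a b := hB' a b hσab
  -- memberships of a and b in S
  have hnotin : ∀ z : ZMod n, (z - u).val ≠ 0 → (z - u).val ≠ κ → z ∈ S := by
    intro z h1 h2
    refine hmemS z ?_
    rw [hsF]
    simp only [Finset.mem_insert, Finset.mem_singleton]
    push_neg
    constructor
    · intro h; exact h1 (by rw [h, sub_self, ZMod.val_zero])
    · intro h; exact h2 (by rw [h, hκval])
  have haS : a ∈ S := hnotin a (by omega) (by omega)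
  have hbS : b ∈ S := hnotin b (by omega) (by omega)
  -- reach y ~ a within the (u, vv) arc
  have hSu : ∀ z : ZMod n, 0 < (z - u).val → (z - u).val < κ → z ∈ S := by
    intro z h1 h2
    exact hnotin z (by omega) (by omega)
  have hyu : (y - u).val = k - m₁ := by
    have e : y - u = ((k - m₁ : ℕ) : ZMod n) := by
      rw [Nat.cast_sub (by omega), hu, ← hyx]; push_cast; ring
    rw [e, val_cast (by omega)]
  have hra : ((bpGraph n B').induce S).Reachable
      ⟨y, hSu y (by omega) (by omega)⟩ ⟨a, hSu a ha1 ha2⟩ :=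
    arc_reach hn B' S u κ hSu y a (by omega) (by omega) ha1 ha2 (by omega)
  -- reach x ~ b within the (vv, u) arc
  have hSv : ∀ z : ZMod n, 0 < (z - vv).val → (z - vv).val < n - κ → z ∈ S := by
    intro z h1 h2
    have e1 : (z - u).val ≠ 0 := by
      intro h
      have : z = u := pos_eq_zero.mp h
      rw [this, huval] at h1 h2
      omega
    have e2 : (z - u).val ≠ κ := by
      intro h
      have : z = vv := by
        rw [eq_iff_pos (a := u), h, hκval]
      rw [this, sub_self, ZMod.val_zero] at h1
      omega
    exact hnotin z e1 e2
  have hxvv : (x - vv).val = n - (k + m₂) := by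
    rw [show x - vv = -(vv - x) by ring, ZMod.neg_val, if_neg, hvx]
    intro h
    rw [h, ZMod.val_zero] at hvx
    omega
  have hbvv : (b - vv).val = (b - u).val - κ := by
    have e : b - vv = (((b-u).val - κ : ℕ) : ZMod n) := by
      rw [Nat.cast_sub (by omega), cast_val (b - u)]
      rw [show ((κ:ℕ) : ZMod n) = vv - u by rw [← hκval, cast_val]]
      ring
    rw [e, val_cast (by omega)]
  have hrb : ((bpGraph n B').induce S).Reachable
      ⟨x, hSv x (by omega) (by omega)⟩ ⟨b, hSv b (by omega) (by omega)⟩ :=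
    arc_reach hn B' S vv (n - κ) hSv x b (by omega) (by omega) (by omega) (by omega)
      (by omega)
  have hadjI : ((bpGraph n B').induce S).Adj ⟨a, haS⟩ ⟨b, hbS⟩ := by simpa using hadj
  exact (hrb.trans hadjI.symm.reachable).trans hra.symm

end St11

namespace St11

variable {n : ℕ} [NeZero n]
variable {B : Finset (Sym2 (ZMod n))} {p : ZMod n → Pt} {σ : ZMod n → ZMod n → ℝ}

lemma not_B_empty (hn : 4 ≤ n) (hconv : IsStrictlyConvexPolygon n p)
    (hs : IsEquilibriumStress (bpGraph n B) p σ)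
    (hpos : ∀ i : ZMod n, 0 < σ i (i+1)) (hBe : B = ∅) : False := by
  have h1v : (1 : ZMod n).val = 1 := by
    rw [show (1 : ZMod n) = ((1:ℕ) : ZMod n) by push_cast; rfl, val_cast (by omega)]
  set u : ZMod n := 0 with hu
  have hum1 : (u - 1 - u).val = n - 1 := by
    rw [show u - 1 - u = -(1 : ZMod n) by ring, ZMod.neg_val,
      if_neg (one_ne_zero' (by omega : 2 ≤ n)), h1v]
  obtain ⟨f, hf⟩ := hconv.1 u
  have hT := T1 hs f u
  have hpair_ne : u + 1 ≠ u - 1 := by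
    intro h
    have h1 : (u + 1 - u).val = 1 := by rw [show u + 1 - u = (1:ZMod n) by ring, h1v]
    rw [h, hum1] at h1
    omega
  have hzero : ∀ j ∈ (Finset.univ : Finset (ZMod n)),
      j ∉ ({u+1, u-1} : Finset (ZMod n)) → σ u j * (f (p u) - f (p j)) = 0 := by
    intro j _ hj
    simp only [Finset.mem_insert, Finset.mem_singleton] at hj
    push_neg at hj
    obtain ⟨hj1, hj2⟩ := hj
    have : σ u j = 0 := by
      refine hs.2.1 u j ?_
      rw [bp_adj]
      rintro ⟨hor | hbd, -⟩
      · rw [hBe] at hor; simp at hor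
      · rcases boundary_iff.mp hbd with h' | h'
        · exact hj1 h'
        · exact hj2 (by rw [h']; ring)
    rw [this, zero_mul]
  have hps : ∑ j ∈ ({u+1, u-1} : Finset (ZMod n)), σ u j * (f (p u) - f (p j)) = 0 := by
    rw [Finset.sum_subset (Finset.subset_univ _) hzero]
    exact hT
  rw [Finset.sum_pair hpair_ne] at hps
  have hp1 : 0 < σ u (u+1) := hpos u
  have hp2 : 0 < σ u (u-1) := by
    have h2 := hpos (u-1)
    rw [show u - 1 + 1 = u from by ring] at h2
    rw [hs.1]
    exact h2
  have hf1 : f (p (u+1)) < f (p u) := hf _ (add_one_ne (by omega) u)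
  have hf2 : f (p (u-1)) < f (p u) := hf _ (sub_one_ne (by omega) u)
  nlinarith [mul_pos hp1 (sub_pos.mpr hf1), mul_pos hp2 (sub_pos.mpr hf2)]

end St11


open St11

/-- Let `G` be a minimally 3-connected braced polygon graph,
`(G, p)` a strictly convex plane realisation, and `ω` a non-zero equilibrium stress
that is non-positive on the braces.  Then `ω` is a proper stress (positive on each
boundary edge, negative on each brace), and the space of equilibrium stresses of
`(G, p)` is one-dimensional. -/
theorem stmt11 (n : ℕ) [NeZero n] (hn : 4 ≤ n) (B : Finset (Sym2 (ZMod n)))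
    (hB : ∀ e ∈ B, ¬ e.IsDiag ∧ ¬ IsBoundaryEdge n e)
    (hmin : MinThreeConnectedBP n B)
    (p : ZMod n → Pt) (hconv : IsStrictlyConvexPolygon n p)
    (ω : ZMod n → ZMod n → ℝ)
    (hstress : IsEquilibriumStress (bpGraph n B) p ω)
    (hnz : ω ≠ 0)
    (hbr : ∀ i j : ZMod n, s(i, j) ∈ B → ω i j ≤ 0) :
    (∀ i : ZMod n, 0 < ω i (i + 1)) ∧
    (∀ i j : ZMod n, s(i, j) ∈ B → ω i j < 0) ∧
    (∀ ω' : ZMod n → ZMod n → ℝ, IsEquilibriumStress (bpGraph n B) p ω' →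
      ∃ c : ℝ, ω' = c • ω) := by
  have hpos : ∀ i : ZMod n, 0 < ω i (i+1) := boundary_pos hn hconv hstress hnz hbr
  have hneg : ∀ i j : ZMod n, s(i,j) ∈ B → ω i j < 0 := by
    intro i j hij
    rcases lt_or_eq_of_le (hbr i j hij) with h | h
    · exact h
    · exfalso
      have h0 : ω i j = 0 := h
      have hB' : ∀ a b : ZMod n, ω a b ≠ 0 → (bpGraph n (B.erase s(i,j))).Adj a b := by
        intro a b hab
        have hadj : (bpGraph n B).Adj a b := by
          by_contra hna
          exact hab (hstress.2.1 a b hna)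
        rw [bp_adj] at hadj ⊢
        obtain ⟨hor, hne⟩ := hadj
        refine ⟨?_, hne⟩
        rcases hor with hmem | hbd
        · left
          rw [Finset.mem_erase]
          refine ⟨?_, hmem⟩
          intro he
          rw [Sym2.eq_iff] at he
          rcases he with ⟨rfl, rfl⟩ | ⟨rfl, rfl⟩
          · exact hab h0
          · exact hab ((hstress.1 a b).trans h0)
        · exact Or.inr hbd
      exact hmin.2 _ hij (build_threeconn hn hconv hstress hnz hbr _ hB')
  refine ⟨hpos, hneg, ?_⟩
  intro ω' hω'
  rcases Finset.eq_empty_or_nonempty B with hBe | hBne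
  · exact (not_B_empty hn hconv hstress hpos hBe).elim
  set q : Sym2 (ZMod n) → ℝ := Sym2.lift ⟨fun i j => -ω' i j / ω i j, by
      intro a b
      show -ω' a b / ω a b = -ω' b a / ω b a
      rw [hω'.1 a b, hstress.1 a b]⟩ with hq
  set T : ℝ := (B.image q).max' (hBne.image q) with hT
  have hTmem := Finset.max'_mem (B.image q) (hBne.image q)
  rw [Finset.mem_image] at hTmem
  obtain ⟨e₀, he₀B, he₀⟩ := hTmem
  have hTle : ∀ e ∈ B, q e ≤ T := fun e he =>
    Finset.le_max' _ _ (Finset.mem_image_of_mem q he)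
  set ω'' : ZMod n → ZMod n → ℝ := fun i j => ω' i j + T * ω i j with hω''
  have hs'' : IsEquilibriumStress (bpGraph n B) p ω'' := by
    refine ⟨fun i j => ?_, fun i j hna => ?_, fun i => ?_⟩
    · show ω' i j + T * ω i j = ω' j i + T * ω j i
      rw [hω'.1 i j, hstress.1 i j]
    · show ω' i j + T * ω i j = 0
      rw [hω'.2.1 i j hna, hstress.2.1 i j hna]; ring
    · have h1 := hω'.2.2 i
      have h2 := hstress.2.2 i
      calc ∑ j, ω'' i j • (p i - p j)
          = ∑ j, (ω' i j • (p i - p j) + T • (ω i j • (p i - p j))) := by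
            refine Finset.sum_congr rfl fun j _ => ?_
            show (ω' i j + T * ω i j) • (p i - p j) = _
            rw [add_smul, smul_smul]
        _ = (∑ j, ω' i j • (p i - p j)) + T • (∑ j, ω i j • (p i - p j)) := by
            rw [Finset.sum_add_distrib, Finset.smul_sum]
        _ = 0 := by rw [h1, h2, smul_zero, add_zero]
  have hble'' : ∀ i j : ZMod n, s(i,j) ∈ B → ω'' i j ≤ 0 := by
    intro i j hij
    have hqe : q s(i,j) = -ω' i j / ω i j := by rw [hq, Sym2.lift_mk]
    have hle := hTle _ hij
    rw [hqe] at hle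
    have hω0 : ω i j < 0 := hneg i j hij
    show ω' i j + T * ω i j ≤ 0
    have h2 : T * ω i j ≤ (-ω' i j / ω i j) * ω i j :=
      mul_le_mul_of_nonpos_right hle (le_of_lt hω0)
    have h3 : (-ω' i j / ω i j) * ω i j = -ω' i j :=
      div_mul_cancel₀ _ (ne_of_lt hω0)
    linarith
  obtain ⟨i₀, j₀, rfl⟩ : ∃ a b : ZMod n, e₀ = s(a, b) := by
    induction e₀ using Sym2.ind with
    | _ a b => exact ⟨a, b, rfl⟩
  have he0z : ω'' i₀ j₀ = 0 := by
    have hqe : q s(i₀,j₀) = -ω' i₀ j₀ / ω i₀ j₀ := by rw [hq, Sym2.lift_mk]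
    have hω0 : ω i₀ j₀ < 0 := hneg _ _ he₀B
    have hTq : T = q s(i₀,j₀) := hT.trans he₀.symm
    show ω' i₀ j₀ + T * ω i₀ j₀ = 0
    rw [hTq, hqe, div_mul_cancel₀ _ (ne_of_lt hω0)]
    ring
  by_cases hz : ω'' = 0
  · refine ⟨-T, ?_⟩
    funext i j
    have h1 := congrFun (congrFun hz i) j
    have h2 : ω' i j + T * ω i j = 0 := h1
    simp only [Pi.smul_apply, smul_eq_mul]
    linarith
  · exfalso
    have hB'' : ∀ a b : ZMod n, ω'' a b ≠ 0 → (bpGraph n (B.erase s(i₀,j₀))).Adj a b := by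
      intro a b hab
      have hadj : (bpGraph n B).Adj a b := by
        by_contra hna
        exact hab (hs''.2.1 a b hna)
      rw [bp_adj] at hadj ⊢
      obtain ⟨hor, hne⟩ := hadj
      refine ⟨?_, hne⟩
      rcases hor with hmem | hbd
      · left
        rw [Finset.mem_erase]
        refine ⟨?_, hmem⟩
        intro he
        rw [Sym2.eq_iff] at he
        rcases he with ⟨rfl, rfl⟩ | ⟨rfl, rfl⟩
        · exact hab he0z
        · exact hab ((hs''.1 a b).trans he0z)
      · exact Or.inr hbd
    exact hmin.2 _ he₀B (build_threeconn hn hconv hs'' hz hble'' _ hB'')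
end

section
/- Let G be a minimally 3-connected braced polygon graph on n vertices whose braces pairwise connect via crossings (3-connectivity), and let G* be a dual polygon of G (each brace e of G replaced by a dual brace e', a pair of vertices disconnecting G - e). Then for every path segment of k consecutive vertices on the boundary polygon with 1 < k < n, the induced subgraph of G* on this segment contains at most k - 2 dual braces. -/
/-- `v` lies in the segment of `k` consecutive boundary vertices starting at `i`. -/
def InSeg (n : ℕ) (i : ZMod n) (k : ℕ) (v : ZMod n) : Prop :=
  ∃ t : ℕ, t < k ∧ v = i + (t : ZMod n)

set_option linter.unusedSectionVars false
section Pos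
variable {n : ℕ} [NeZero n]

/-- position of `v` relative to base `i`. -/
def zpos (i v : ZMod n) : ℕ := (v - i).val

lemma zpos_lt (i v : ZMod n) : zpos i v < n := ZMod.val_lt _

lemma add_zpos (i v : ZMod n) : i + (zpos i v : ZMod n) = v := by
  have : ((v - i).val : ZMod n) = v - i := ZMod.natCast_rightInverse _
  rw [zpos, this]; ring

lemma zpos_add (i : ZMod n) {c : ℕ} (h : c < n) : zpos i (i + (c : ZMod n)) = c := by
  rw [zpos, add_sub_cancel_left, ZMod.val_cast_of_lt h]

lemma castinj {a b : ℕ} (ha : a < n) (hb : b < n) (h : (a : ZMod n) = b) : a = b := by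
  have := ZMod.val_cast_of_lt ha
  rw [h, ZMod.val_cast_of_lt hb] at this; omega

lemma zpos_eq_zero_iff {i v : ZMod n} : zpos i v = 0 ↔ v = i := by
  constructor
  · intro h; have := add_zpos i v; rw [h] at this; simpa using this.symm
  · rintro rfl; simpa using zpos_add _ (Nat.pos_of_ne_zero (NeZero.ne n))

lemma zpos_eq_iff {i v : ZMod n} {c : ℕ} (hc : c < n) : zpos i v = c ↔ v = i + (c : ZMod n) := by
  constructor
  · intro h; rw [← add_zpos i v, h]
  · rintro rfl; exact zpos_add i hc

lemma shift1 (i : ZMod n) {a c : ℕ} (hac : a ≤ c) (hc : c < n) :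
    zpos (i + (a : ZMod n)) (i + (c : ZMod n)) = c - a := by
  have h1 : i + (c : ZMod n) = (i + (a : ZMod n)) + ((c - a : ℕ) : ZMod n) := by
    have : ((c - a : ℕ) : ZMod n) = (c : ℕ) - (a : ℕ) := by
      push_cast [Nat.cast_sub hac]; ring
    rw [this]; ring
  rw [h1, zpos_add _ (by omega)]

lemma shift2 (i : ZMod n) {a c : ℕ} (hca : c < a) (ha : a < n) :
    zpos (i + (a : ZMod n)) (i + (c : ZMod n)) = c + n - a := by
  have h1 : i + (c : ZMod n) = (i + (a : ZMod n)) + ((c + n - a : ℕ) : ZMod n) := by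
    have : ((c + n - a : ℕ) : ZMod n) = (c : ℕ) + (n : ℕ) - (a : ℕ) := by
      push_cast [Nat.cast_sub (by omega : a ≤ c + n)]; ring
    rw [this]
    have hn0 : ((n : ℕ) : ZMod n) = 0 := ZMod.natCast_self n
    rw [hn0]; ring
  rw [h1, zpos_add _ (by omega)]

lemma unshift (i : ZMod n) {a t : ℕ} (h : a + t < n) :
    (i + (a : ZMod n)) + (t : ZMod n) = i + ((a + t : ℕ) : ZMod n) := by push_cast; ring

lemma unshift2 (i : ZMod n) {a t : ℕ} (h : n ≤ a + t) (ha : a < n) (ht : t < n) :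
    (i + (a : ZMod n)) + (t : ZMod n) = i + ((a + t - n : ℕ) : ZMod n) := by
  have : ((a + t - n : ℕ) : ZMod n) = (a : ℕ) + (t : ZMod n) - (n : ℕ) := by
    push_cast [Nat.cast_sub h]; ring
  rw [this, ZMod.natCast_self]; ring

end Pos

section Graph
variable {V : Type*}

lemma cross_of_walk {H : SimpleGraph V} {T P Q : Set V}
    (hdisj : ∀ v, v ∈ P → v ∈ Q → False) (hT : ∀ v ∈ T, v ∈ P ∨ v ∈ Q) :
    ∀ {u v : T}, (H.induce T).Walk u v → (u : V) ∈ P → (v : V) ∈ Q →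
      ∃ a b, a ∈ P ∧ b ∈ Q ∧ H.Adj a b := by
  intro u v w
  induction w with
  | nil => intro h1 h2; exact (hdisj _ h1 h2).elim
  | @cons u' m v' h w ih =>
    intro h1 h2
    rcases hT m.1 m.2 with hm | hm
    · exact ih hm h2
    · exact ⟨u'.1, m.1, h1, hm, h⟩

lemma cross_of_conn {H : SimpleGraph V} {T P Q : Set V}
    (hdisj : ∀ v, v ∈ P → v ∈ Q → False) (hT : ∀ v ∈ T, v ∈ P ∨ v ∈ Q)
    (hconn : (H.induce T).Connected) {p0 q0 : V} (hp0 : p0 ∈ T) (hp0P : p0 ∈ P)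
    (hq0 : q0 ∈ T) (hq0Q : q0 ∈ Q) : ∃ a b, a ∈ P ∧ b ∈ Q ∧ H.Adj a b := by
  obtain ⟨w⟩ := hconn.preconnected ⟨p0, hp0⟩ ⟨q0, hq0⟩
  exact cross_of_walk hdisj hT w hp0P hq0Q

end Graph

section Cyc
set_option linter.unusedSectionVars false
variable {n : ℕ} [NeZero n]

lemma reach_arc {H : SimpleGraph (ZMod n)} (hbd : ∀ z, H.Adj z (z + 1))
    {T : Set (ZMod n)} (z : ZMod n) (m : ℕ) (hmem : ∀ t, t ≤ m → z + (t : ZMod n) ∈ T)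
    (hz : z ∈ T) :
    ∀ t, (ht : t ≤ m) → (H.induce T).Reachable ⟨z, hz⟩ ⟨z + (t : ZMod n), hmem t ht⟩ := by
  intro t
  induction t with
  | zero =>
    intro ht
    have : (⟨z + ((0:ℕ) : ZMod n), hmem 0 ht⟩ : T) = ⟨z, hz⟩ := Subtype.ext (by simp)
    rw [this]
  | succ s ih =>
    intro ht
    refine (ih (by omega)).trans (SimpleGraph.Adj.reachable ?_)
    show H.Adj (z + (s : ZMod n)) (z + ((s + 1 : ℕ) : ZMod n))
    have : z + ((s + 1 : ℕ) : ZMod n) = (z + (s : ZMod n)) + 1 := by push_cast; ring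
    rw [this]; exact hbd _

lemma mem_pair_compl {x y v : ZMod n} : v ∈ (({x, y} : Set (ZMod n))ᶜ) ↔ v ≠ x ∧ v ≠ y := by
  simp [not_or]

/-- connectivity of the complement of two cyclically-adjacent vertices -/
lemma conn_adjpair (hn : 4 ≤ n) {H : SimpleGraph (ZMod n)} (hbd : ∀ z, H.Adj z (z + 1))
    (y : ZMod n) : (H.induce (({y, y + 1} : Set (ZMod n))ᶜ)).Connected := by
  set T : Set (ZMod n) := ({y, y + 1} : Set (ZMod n))ᶜ with hT
  have hyy : (y + 1 : ZMod n) = y + ((1 : ℕ) : ZMod n) := by push_cast; ring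
  have hmemT : ∀ v, v ∈ T ↔ zpos y v ≠ 0 ∧ zpos y v ≠ 1 := by
    intro v
    rw [mem_pair_compl]
    constructor
    · rintro ⟨h1, h2⟩
      refine ⟨fun h => h1 (zpos_eq_zero_iff.mp h), fun h => h2 ?_⟩
      rw [hyy]; exact (zpos_eq_iff (by omega)).mp h
    · rintro ⟨h1, h2⟩
      refine ⟨fun h => h1 (zpos_eq_zero_iff.mpr h), fun h => h2 ?_⟩
      rw [hyy] at h; exact (zpos_eq_iff (by omega)).mpr h
  have harc : ∀ t, t ≤ n - 3 → (y + ((2:ℕ) : ZMod n)) + (t : ZMod n) ∈ T := by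
    intro t ht
    rw [unshift y (by omega), hmemT, zpos_add y (by omega : 2 + t < n)]
    omega
  have hz : (y + ((2:ℕ) : ZMod n)) ∈ T := by simpa using harc 0 (by omega)
  have hreach : ∀ v (hv : v ∈ T), (H.induce T).Reachable ⟨y + ((2:ℕ):ZMod n), hz⟩ ⟨v, hv⟩ := by
    intro v hv
    have h1 := (hmemT v).mp hv
    have hlt := zpos_lt y v
    have hv2 : v = (y + ((2:ℕ):ZMod n)) + ((zpos y v - 2 : ℕ) : ZMod n) := by
      rw [unshift y (by omega), ← zpos_eq_iff (show 2 + (zpos y v - 2) < n by omega)]; omega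
    obtain ⟨t, ht, rfl⟩ : ∃ t, t ≤ n - 3 ∧ v = (y + ((2:ℕ):ZMod n)) + (t : ZMod n) :=
      ⟨zpos y v - 2, by omega, hv2⟩
    exact reach_arc hbd _ (n - 3) harc hz t ht
  rw [SimpleGraph.connected_iff]
  refine ⟨fun a b => ?_, ⟨⟨_, hz⟩⟩⟩
  exact ((hreach a.1 a.2).symm.trans (hreach b.1 b.2))

/-- connectivity of the complement of `{x, x+D}` given a crossing edge -/
lemma conn_cross (hn : 4 ≤ n) {H : SimpleGraph (ZMod n)} (hbd : ∀ z, H.Adj z (z + 1))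
    {x : ZMod n} {D : ℕ} (hD2 : 2 ≤ D) (hDn : D ≤ n - 2) {p q : ZMod n}
    (hpq : H.Adj p q) (hp1 : 0 < zpos x p) (hp2 : zpos x p < D) (hq : D < zpos x q) :
    (H.induce (({x, x + ((D:ℕ) : ZMod n)} : Set (ZMod n))ᶜ)).Connected := by
  set T : Set (ZMod n) := ({x, x + ((D:ℕ) : ZMod n)} : Set (ZMod n))ᶜ with hT
  have hmemT : ∀ v, v ∈ T ↔ zpos x v ≠ 0 ∧ zpos x v ≠ D := by
    intro v
    rw [mem_pair_compl]
    constructor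
    · rintro ⟨h1, h2⟩
      exact ⟨fun h => h1 (zpos_eq_zero_iff.mp h), fun h => h2 ((zpos_eq_iff (by omega)).mp h)⟩
    · rintro ⟨h1, h2⟩
      exact ⟨fun h => h1 (zpos_eq_zero_iff.mpr h), fun h => h2 ((zpos_eq_iff (by omega)).mpr h)⟩
  -- inner arc base
  have harcI : ∀ t, t ≤ D - 2 → (x + ((1:ℕ) : ZMod n)) + (t : ZMod n) ∈ T := by
    intro t ht
    rw [unshift x (by omega), hmemT, zpos_add x (by omega : 1 + t < n)]
    omega
  have hzI : (x + ((1:ℕ) : ZMod n)) ∈ T := by simpa using harcI 0 (by omega)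
  have harcO : ∀ t, t ≤ n - D - 2 → (x + ((D+1:ℕ) : ZMod n)) + (t : ZMod n) ∈ T := by
    intro t ht
    rw [unshift x (by omega), hmemT, zpos_add x (by omega : D + 1 + t < n)]
    omega
  have hzO : (x + ((D+1:ℕ) : ZMod n)) ∈ T := by simpa using harcO 0 (by omega)
  have hpT : p ∈ T := (hmemT p).mpr (by omega)
  have hqT : q ∈ T := by
    have := zpos_lt x q
    exact (hmemT q).mpr (by omega)
  have hreachI : ∀ v (hv : v ∈ T), 0 < zpos x v → zpos x v < D →
      (H.induce T).Reachable ⟨x + ((1:ℕ):ZMod n), hzI⟩ ⟨v, hv⟩ := by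
    intro v hv h1 h2
    have hv2 : v = (x + ((1:ℕ):ZMod n)) + ((zpos x v - 1 : ℕ) : ZMod n) := by
      rw [unshift x (by omega), ← zpos_eq_iff (show 1 + (zpos x v - 1) < n by omega)]; omega
    obtain ⟨t, ht, rfl⟩ : ∃ t, t ≤ D - 2 ∧ v = (x + ((1:ℕ):ZMod n)) + (t : ZMod n) :=
      ⟨zpos x v - 1, by omega, hv2⟩
    exact reach_arc hbd _ (D - 2) harcI hzI t ht
  have hreachO : ∀ v (hv : v ∈ T), D < zpos x v →
      (H.induce T).Reachable ⟨x + ((D+1:ℕ):ZMod n), hzO⟩ ⟨v, hv⟩ := by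
    intro v hv h1
    have hlt := zpos_lt x v
    have hv2 : v = (x + ((D+1:ℕ):ZMod n)) + ((zpos x v - D - 1 : ℕ) : ZMod n) := by
      rw [unshift x (by omega), ← zpos_eq_iff (show D + 1 + (zpos x v - D - 1) < n by omega)]; omega
    obtain ⟨t, ht, rfl⟩ : ∃ t, t ≤ n - D - 2 ∧ v = (x + ((D+1:ℕ):ZMod n)) + (t : ZMod n) :=
      ⟨zpos x v - D - 1, by omega, hv2⟩
    exact reach_arc hbd _ (n - D - 2) harcO hzO t ht
  -- everything reaches p
  have hPQ : (H.induce T).Adj ⟨q, hqT⟩ ⟨p, hpT⟩ := by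
    show H.Adj q p
    exact hpq.symm
  have hreach : ∀ v (hv : v ∈ T), (H.induce T).Reachable ⟨p, hpT⟩ ⟨v, hv⟩ := by
    intro v hv
    have h1 := (hmemT v).mp hv
    have hlt := zpos_lt x v
    rcases lt_or_ge D (zpos x v) with h | h
    · exact hPQ.reachable.symm.trans ((hreachO q hqT hq).symm.trans (hreachO v hv h))
    · exact (hreachI p hpT hp1 hp2).symm.trans (hreachI v hv (by omega) (by omega))
  rw [SimpleGraph.connected_iff]
  exact ⟨fun a b => (hreach a.1 a.2).symm.trans (hreach b.1 b.2), ⟨⟨p, hpT⟩⟩⟩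

end Cyc

section BP
set_option linter.unusedSectionVars false
variable {n : ℕ} [NeZero n] {B : Finset (Sym2 (ZMod n))}

lemma gadj_iff {x y : ZMod n} :
    (bpGraph n B).Adj x y ↔ (s(x, y) ∈ B ∨ IsBoundaryEdge n s(x, y)) ∧ x ≠ y := by
  rw [bpGraph, SimpleGraph.fromEdgeSet_adj]
  simp [Set.mem_union]

lemma bp_one_ne_zero (hn : 4 ≤ n) : (1 : ZMod n) ≠ 0 := by
  intro h
  have : ((1:ℕ) : ZMod n) = ((0:ℕ) : ZMod n) := by push_cast; exact h
  have := castinj (by omega) (by omega) this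
  omega

lemma gbd (hn : 4 ≤ n) : ∀ z : ZMod n, (bpGraph n B).Adj z (z + 1) := by
  intro z
  rw [gadj_iff]
  exact ⟨Or.inr ⟨z, rfl⟩, fun h => bp_one_ne_zero hn (left_eq_add.mp h)⟩

lemma hbd_del (hn : 4 ≤ n) (hB : ∀ e ∈ B, ¬ e.IsDiag ∧ ¬ IsBoundaryEdge n e) {e : Sym2 (ZMod n)}
    (he : e ∈ B) : ∀ z : ZMod n, ((bpGraph n B).deleteEdges {e}).Adj z (z + 1) := by
  intro z
  rw [SimpleGraph.deleteEdges_adj]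
  refine ⟨gbd hn z, fun h => ?_⟩
  rw [Set.mem_singleton_iff] at h
  exact (hB e he).2 (h ▸ ⟨z, rfl⟩)

lemma badj {e : Sym2 (ZMod n)} (hB : ∀ e ∈ B, ¬ e.IsDiag ∧ ¬ IsBoundaryEdge n e)
    (he : e ∈ B) {p q : ZMod n} (hpq : e = s(p, q)) : (bpGraph n B).Adj p q := by
  rw [gadj_iff]
  refine ⟨Or.inl (hpq ▸ he), fun h => (hB e he).1 ?_⟩
  rw [hpq, Sym2.mk_isDiag_iff]
  exact h

variable (hn : 4 ≤ n) (hB : ∀ e ∈ B, ¬ e.IsDiag ∧ ¬ IsBoundaryEdge n e)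
variable {d : Sym2 (ZMod n) → Sym2 (ZMod n)}
variable (hdual : ∀ e ∈ B,
      ¬ (((bpGraph n B).deleteEdges {e}).induce
          ({v : ZMod n | v ∈ d e}ᶜ)).Connected)

lemma dual_set {x y : ZMod n} {e : Sym2 (ZMod n)} (hde : d e = s(x, y)) :
    {v : ZMod n | v ∈ d e} = ({x, y} : Set (ZMod n)) := by
  ext v
  simp [hde, Sym2.mem_iff]

include hn hB hdual in
/-- the two ends of a dual brace are not cyclically adjacent -/
lemma dual_not_one {e : Sym2 (ZMod n)} (he : e ∈ B) {x : ZMod n}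
    (hde : d e = s(x, x + ((1:ℕ) : ZMod n))) : False := by
  apply hdual e he
  rw [dual_set hde]
  have h1 : x + ((1:ℕ) : ZMod n) = x + 1 := by push_cast; ring
  rw [h1]
  exact conn_adjpair hn (hbd_del hn hB he) x

include hn hB hdual in
/-- no edge other than `e` crosses the dual brace of `e` -/
lemma dual_nocross {e : Sym2 (ZMod n)} (he : e ∈ B) {x : ZMod n} {D : ℕ}
    (hde : d e = s(x, x + ((D:ℕ) : ZMod n))) (hD2 : 2 ≤ D) (hDn : D ≤ n - 2)
    {p q : ZMod n} (hadj : (bpGraph n B).Adj p q) (hne : s(p, q) ≠ e)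
    (h1 : 0 < zpos x p) (h2 : zpos x p < D) : zpos x q ≤ D := by
  by_contra hq
  push_neg at hq
  apply hdual e he
  rw [dual_set hde]
  have hadj' : ((bpGraph n B).deleteEdges {e}).Adj p q := by
    rw [SimpleGraph.deleteEdges_adj]
    exact ⟨hadj, by simpa using hne⟩
  exact conn_cross hn (hbd_del hn hB he) hD2 hDn hadj' h1 h2 hq

/-- 3-connectivity yields a crossing edge over any pair `{x, x+D}` -/
lemma exists_cross (hconn : ThreeConnected (bpGraph n B)) (hn : 4 ≤ n) (x : ZMod n) {D : ℕ}
    (hD2 : 2 ≤ D) (hDn : D ≤ n - 2) :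
    ∃ p q, (bpGraph n B).Adj p q ∧ 0 < zpos x p ∧ zpos x p < D ∧ D < zpos x q := by
  set y : ZMod n := x + ((D:ℕ) : ZMod n) with hy
  have hcard : ({x, y} : Finset (ZMod n)).card ≤ 2 := by
    refine le_trans (Finset.card_insert_le _ _) ?_
    simp
  have hconn2 := hconn.2 {x, y} hcard
  have hTeq : ((↑({x, y} : Finset (ZMod n)) : Set (ZMod n))ᶜ) = (({x, y} : Set (ZMod n))ᶜ) := by
    simp
  rw [hTeq] at hconn2
  have hmemT : ∀ v : ZMod n, v ∈ (({x, y} : Set (ZMod n))ᶜ) ↔ zpos x v ≠ 0 ∧ zpos x v ≠ D := by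
    intro v
    rw [mem_pair_compl]
    constructor
    · rintro ⟨ha, hb⟩
      exact ⟨fun h => ha (zpos_eq_zero_iff.mp h), fun h => hb ((zpos_eq_iff (by omega)).mp h)⟩
    · rintro ⟨ha, hb⟩
      exact ⟨fun h => ha (zpos_eq_zero_iff.mpr h), fun h => hb ((zpos_eq_iff (by omega)).mpr h)⟩
  have hp0 : x + ((1:ℕ) : ZMod n) ∈ (({x, y} : Set (ZMod n))ᶜ) := by
    rw [hmemT, zpos_add x (by omega)]; omega
  have hq0 : x + ((D+1:ℕ) : ZMod n) ∈ (({x, y} : Set (ZMod n))ᶜ) := by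
    rw [hmemT, zpos_add x (by omega)]; omega
  obtain ⟨a, b, haP, hbQ, hab⟩ := cross_of_conn
    (P := {v : ZMod n | 0 < zpos x v ∧ zpos x v < D}) (Q := {v : ZMod n | D < zpos x v})
    (fun v hv1 hv2 => by simp only [Set.mem_setOf_eq] at hv1 hv2; omega)
    (fun v hv => by
      rw [hmemT] at hv
      have := zpos_lt x v
      simp only [Set.mem_setOf_eq]
      omega)
    hconn2 hp0 (by rw [Set.mem_setOf_eq, zpos_add x (by omega)]; omega)
    hq0 (by rw [Set.mem_setOf_eq, zpos_add x (by omega)]; omega)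
  exact ⟨a, b, hab, haP.1, haP.2, hbQ⟩

include hn hB hdual in
/-- the brace `e` crosses its own dual brace -/
lemma dual_ecross (hconn : ThreeConnected (bpGraph n B)) {e : Sym2 (ZMod n)} (he : e ∈ B)
    {x : ZMod n} {D : ℕ} (hde : d e = s(x, x + ((D:ℕ) : ZMod n))) (hD2 : 2 ≤ D)
    (hDn : D ≤ n - 2) :
    ∃ p q, e = s(p, q) ∧ 0 < zpos x p ∧ zpos x p < D ∧ D < zpos x q := by
  obtain ⟨p, q, hadj, h1, h2, h3⟩ := exists_cross hconn hn x hD2 hDn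
  by_cases hne : s(p, q) = e
  · exact ⟨p, q, hne.symm, h1, h2, h3⟩
  · have := dual_nocross hn hB hdual he hde hD2 hDn hadj hne h1 h2
    omega

end BP

section Main
set_option linter.unusedSectionVars false
variable {n : ℕ} [NeZero n] {B : Finset (Sym2 (ZMod n))} {d : Sym2 (ZMod n) → Sym2 (ZMod n)}

lemma addsub (i : ZMod n) {a b : ℕ} (hab : a ≤ b) :
    i + ((b : ℕ) : ZMod n) = (i + ((a : ℕ) : ZMod n)) + (((b - a : ℕ)) : ZMod n) := by
  have : ((b - a : ℕ) : ZMod n) = ((b : ℕ) : ZMod n) - ((a : ℕ) : ZMod n) := by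
    push_cast [Nat.cast_sub hab]; ring
  rw [this]; ring

lemma zpos_injv {i r v : ZMod n} (h : zpos i r = zpos i v) : r = v := by
  rw [← add_zpos i r, h, add_zpos i v]

/-- data for a brace whose dual lies inside the segment -/
def Key (i : ZMod n) (k : ℕ) (d : Sym2 (ZMod n) → Sym2 (ZMod n)) (e : Sym2 (ZMod n))
    (p : ZMod n) : Prop :=
  ∃ a b : ℕ, ∃ q : ZMod n,
    a + 2 ≤ b ∧ b < k ∧
    d e = s(i + ((a : ℕ) : ZMod n), i + ((b : ℕ) : ZMod n)) ∧
    e = s(p, q) ∧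
    a < zpos i p ∧ zpos i p < b ∧ (zpos i q < a ∨ b < zpos i q)

variable (hn : 4 ≤ n) (hB : ∀ e ∈ B, ¬ e.IsDiag ∧ ¬ IsBoundaryEdge n e)
variable (hdual : ∀ e ∈ B,
      ¬ (((bpGraph n B).deleteEdges {e}).induce
          ({v : ZMod n | v ∈ d e}ᶜ)).Connected)
variable (hconn : ThreeConnected (bpGraph n B))

include hn hconn in
lemma cross_seg (i : ZMod n) {a b : ℕ} (hab : a + 2 ≤ b) (hb : b ≤ n - 2) :
    ∃ r w, (bpGraph n B).Adj r w ∧ a < zpos i r ∧ zpos i r < b ∧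
      (zpos i w < a ∨ b < zpos i w) := by
  obtain ⟨r, w, hadj, h1, h2, h3⟩ :=
    exists_cross hconn hn (i + ((a : ℕ) : ZMod n)) (D := b - a) (by omega) (by omega)
  have hwlt := zpos_lt (i + ((a : ℕ) : ZMod n)) w
  refine ⟨r, w, hadj, ?_, ?_, ?_⟩
  · -- r = i + (a + zpos x r)
    have hr : r = i + (((a + zpos (i + ((a : ℕ) : ZMod n)) r : ℕ)) : ZMod n) := by
      rw [← unshift i (by omega), add_zpos]
    rw [hr, zpos_add i (by omega)]; omega
  · have hr : r = i + (((a + zpos (i + ((a : ℕ) : ZMod n)) r : ℕ)) : ZMod n) := by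
      rw [← unshift i (by omega), add_zpos]
    rw [hr, zpos_add i (by omega)]; omega
  · rcases lt_or_ge (a + zpos (i + ((a : ℕ) : ZMod n)) w) n with h | h
    · have hw : w = i + (((a + zpos (i + ((a : ℕ) : ZMod n)) w : ℕ)) : ZMod n) := by
        rw [← unshift i h, add_zpos]
      rw [hw, zpos_add i h]; omega
    · have hw : w = i + (((a + zpos (i + ((a : ℕ) : ZMod n)) w - n : ℕ)) : ZMod n) := by
        rw [← unshift2 i h (by omega) hwlt, add_zpos]
      rw [hw, zpos_add i (by omega)]; omega

include hn hB hdual in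
lemma nocross_seg {e : Sym2 (ZMod n)} (he : e ∈ B) {i : ZMod n} {a b : ℕ}
    (hde : d e = s(i + ((a : ℕ) : ZMod n), i + ((b : ℕ) : ZMod n)))
    (hab : a + 2 ≤ b) (hb : b ≤ n - 2) {r w : ZMod n}
    (hadj : (bpGraph n B).Adj r w) (hne : s(r, w) ≠ e)
    (hr1 : a < zpos i r) (hr2 : zpos i r < b) :
    a ≤ zpos i w ∧ zpos i w ≤ b := by
  have hde' : d e = s(i + ((a : ℕ) : ZMod n), (i + ((a : ℕ) : ZMod n)) + (((b - a : ℕ)) : ZMod n)) := by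
    rw [hde, addsub i (by omega : a ≤ b)]
  have hrx : zpos (i + ((a : ℕ) : ZMod n)) r = zpos i r - a := by
    conv_lhs => rw [← add_zpos i r]
    exact shift1 i (by omega) (zpos_lt i r)
  have h := dual_nocross hn hB hdual he hde' (by omega) (by omega) hadj hne
    (by rw [hrx]; omega) (by rw [hrx]; omega)
  have hw : w = i + ((zpos i w : ℕ) : ZMod n) := (add_zpos i w).symm
  rcases le_or_gt a (zpos i w) with hcase | hcase
  · rw [hw, shift1 i hcase (zpos_lt i w)] at h
    omega
  · rw [hw, shift2 i hcase (by omega)] at h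
    have := zpos_lt i w
    omega

include hn hB hdual hconn in
lemma ecross_seg {e : Sym2 (ZMod n)} (he : e ∈ B) {i : ZMod n} {a b : ℕ}
    (hde : d e = s(i + ((a : ℕ) : ZMod n), i + ((b : ℕ) : ZMod n)))
    (hab : a + 2 ≤ b) (hb : b ≤ n - 2) :
    ∃ p q, e = s(p, q) ∧ a < zpos i p ∧ zpos i p < b ∧
      (zpos i q < a ∨ b < zpos i q) := by
  obtain ⟨r, w, hadj, h1, h2, h3⟩ := cross_seg hn hconn i hab hb
  by_cases hne : s(r, w) = e
  · exact ⟨r, w, hne.symm, h1, h2, h3⟩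
  · have := nocross_seg hn hB hdual he hde hab hb hadj hne h1 h2
    omega

include hn hB hdual hconn in
lemma segdata {e : Sym2 (ZMod n)} (he : e ∈ B) (hnd : ¬ (d e).IsDiag)
    {i : ZMod n} {k : ℕ} (hk : 2 ≤ k) (hkn : k < n)
    (hseg : ∀ v ∈ d e, InSeg n i k v) : ∃ p, Key i k d e p := by
  obtain ⟨u, v, huv⟩ : ∃ u v, d e = s(u, v) := by
    exact Sym2.exists.mp ⟨d e, rfl⟩
  obtain ⟨a₀, ha₀, hu⟩ := hseg u (by rw [huv]; exact Sym2.mem_mk_left u v)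
  obtain ⟨b₀, hb₀, hv⟩ := hseg v (by rw [huv]; exact Sym2.mem_mk_right u v)
  have huvne : u ≠ v := by
    intro h
    apply hnd
    rw [huv, Sym2.mk_isDiag_iff]
    exact h
  have habne : a₀ ≠ b₀ := by
    intro h
    exact huvne (by rw [hu, hv, h])
  have main : ∀ a b : ℕ, a < b → b < k →
      d e = s(i + ((a : ℕ) : ZMod n), i + ((b : ℕ) : ZMod n)) → ∃ p, Key i k d e p := by
    intro a b hab hbk hde
    have hb2 : b ≤ n - 2 := by omega
    have hD1 : b - a ≠ 1 := by
      intro h1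
      apply dual_not_one hn hB hdual he (x := i + ((a : ℕ) : ZMod n))
      rw [hde, addsub i (by omega : a ≤ b), h1]
    obtain ⟨p, q, hepq, hp1, hp2, hq⟩ :=
      ecross_seg hn hB hdual hconn he hde (by omega) hb2
    exact ⟨p, a, b, q, by omega, hbk, hde, hepq, hp1, hp2, hq⟩
  rcases lt_or_gt_of_ne habne with h | h
  · exact main a₀ b₀ h hb₀ (by rw [huv, hu, hv])
  · refine main b₀ a₀ h ha₀ ?_
    rw [huv, hu, hv, Sym2.eq_swap]

include hn hB hdual hconn in
lemma key_inj_aux {e e' : Sym2 (ZMod n)} (he : e ∈ B) (he' : e' ∈ B) (hne : e ≠ e')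
    {i : ZMod n} {a b a' b' : ℕ} {p q q' : ZMod n}
    (hde : d e = s(i + ((a : ℕ) : ZMod n), i + ((b : ℕ) : ZMod n)))
    (hde' : d e' = s(i + ((a' : ℕ) : ZMod n), i + ((b' : ℕ) : ZMod n)))
    (hab : a + 2 ≤ b) (hab' : a' + 2 ≤ b') (hb2 : b ≤ n - 2) (hb2' : b' ≤ n - 2)
    (hepq : e = s(p, q)) (hepq' : e' = s(p, q'))
    (hp1 : a < zpos i p) (hp2 : zpos i p < b)
    (hp1' : a' < zpos i p) (hp2' : zpos i p < b')
    (hcq : b < zpos i q ∧ zpos i q ≤ b')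
    (hcq' : a ≤ zpos i q' ∧ zpos i q' < a')
    (horder : a < a' ∧ a' < b ∧ b < b') : False := by
  obtain ⟨r, w, hadj, hr1, hr2, hw⟩ :=
    cross_seg hn hconn i (a := a) (b := b') (by omega) (by omega)
  rcases lt_or_ge (zpos i r) b with hcase | hcase
  · -- a < cr < b : r is in the open inner arc of e's dual
    by_cases hre : s(r, w) = e
    · have : s(r, w) = s(p, q) := by rw [hre, hepq]
      rcases Sym2.eq_iff.mp this with ⟨h1, h2⟩ | ⟨h1, h2⟩
      · have : zpos i w = zpos i q := by rw [h2]
        omega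
      · have : zpos i r = zpos i q := by rw [h1]
        omega
    · by_cases hre' : s(r, w) = e'
      · have : s(r, w) = s(p, q') := by rw [hre', hepq']
        rcases Sym2.eq_iff.mp this with ⟨h1, h2⟩ | ⟨h1, h2⟩
        · have : zpos i w = zpos i q' := by rw [h2]
          omega
        · have : zpos i w = zpos i p := by rw [h2]
          omega
      · have := nocross_seg hn hB hdual he hde hab hb2 hadj hre hr1 hcase
        omega
  · -- b ≤ cr < b' : r is in the open inner arc of the dual of e'
    by_cases hre : s(r, w) = e
    · have : s(r, w) = s(p, q) := by rw [hre, hepq]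
      rcases Sym2.eq_iff.mp this with ⟨h1, h2⟩ | ⟨h1, h2⟩
      · have : zpos i r = zpos i p := by rw [h1]
        omega
      · have : zpos i w = zpos i p := by rw [h2]
        omega
    · by_cases hre' : s(r, w) = e'
      · have : s(r, w) = s(p, q') := by rw [hre', hepq']
        rcases Sym2.eq_iff.mp this with ⟨h1, h2⟩ | ⟨h1, h2⟩
        · have : zpos i r = zpos i p := by rw [h1]
          omega
        · have : zpos i r = zpos i q' := by rw [h1]
          omega
      · have := nocross_seg hn hB hdual he' hde' hab' hb2' hadj hre' (by omega) (by omega)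
        omega

include hn hB hdual hconn in
lemma key_inj {e e' : Sym2 (ZMod n)} (he : e ∈ B) (he' : e' ∈ B)
    {i : ZMod n} {k : ℕ} (hkn : k < n) {p : ZMod n}
    (hK : Key i k d e p) (hK' : Key i k d e' p) : e = e' := by
  by_contra hne
  obtain ⟨a, b, q, hab, hbk, hde, hepq, hp1, hp2, hqo⟩ := hK
  obtain ⟨a', b', q', hab', hbk', hde', hepq', hp1', hp2', hqo'⟩ := hK'
  have hb2 : b ≤ n - 2 := by omega
  have hb2' : b' ≤ n - 2 := by omega
  have hq'm : a ≤ zpos i q' ∧ zpos i q' ≤ b := by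
    refine nocross_seg hn hB hdual he hde hab hb2 (badj hB he' hepq') ?_ hp1 hp2
    intro h
    exact hne (by rw [← h, ← hepq'])
  have hqm : a' ≤ zpos i q ∧ zpos i q ≤ b' := by
    refine nocross_seg hn hB hdual he' hde' hab' hb2' (badj hB he hepq) ?_ hp1' hp2'
    intro h
    exact hne (by rw [← h, ← hepq])
  have hcases : (a < a' ∧ b < b') ∨ (a' < a ∧ b' < b) := by omega
  rcases hcases with ⟨h1, h2⟩ | ⟨h1, h2⟩
  · exact key_inj_aux hn hB hdual hconn he he' hne hde hde' hab hab' hb2 hb2'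
      hepq hepq' hp1 hp2 hp1' hp2' (by omega) (by omega) (by omega)
  · exact key_inj_aux hn hB hdual hconn he' he (Ne.symm hne) hde' hde hab' hab hb2' hb2
      hepq' hepq hp1' hp2' hp1 hp2 (by omega) (by omega) (by omega)

end Main

/-- Let `G` be a minimally 3-connected braced polygon graph and let
`d` assign to each brace `e` a dual brace: a non-degenerate pair of vertices whose
removal disconnects `G - e`.  Then for every segment of `k` consecutive boundary
vertices with `1 < k < n`, at most `k - 2` dual braces have both ends in the
segment. -/
theorem stmt14 (n : ℕ) [NeZero n] (hn : 4 ≤ n) (B : Finset (Sym2 (ZMod n)))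
    (hB : ∀ e ∈ B, ¬ e.IsDiag ∧ ¬ IsBoundaryEdge n e)
    (hmin : MinThreeConnectedBP n B)
    (d : Sym2 (ZMod n) → Sym2 (ZMod n))
    (hdnd : ∀ e ∈ B, ¬ (d e).IsDiag)
    (hdual : ∀ e ∈ B,
      ¬ (((bpGraph n B).deleteEdges {e}).induce
          ({v : ZMod n | v ∈ d e}ᶜ)).Connected) :
    ∀ (i : ZMod n) (k : ℕ), 1 < k → k < n →
      {e : Sym2 (ZMod n) | e ∈ B ∧ ∀ v ∈ d e, InSeg n i k v}.ncard ≤ k - 2 := by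
  intro i k hk1 hkn
  classical
  have hconn := hmin.1
  set S : Set (Sym2 (ZMod n)) := {e | e ∈ B ∧ ∀ v ∈ d e, InSeg n i k v} with hS
  set Tgt : Set (ZMod n) := (fun c : ℕ => i + ((c : ℕ) : ZMod n)) '' (Set.Ioo 0 (k - 1))
    with hTgt
  have hTfin : Tgt.Finite := (Set.finite_Ioo _ _).image _
  have hinjT : Set.InjOn (fun c : ℕ => i + ((c : ℕ) : ZMod n)) (Set.Ioo 0 (k - 1)) := by
    intro c1 h1 c2 h2 h
    simp only [Set.mem_Ioo] at h1 h2
    exact castinj (by omega) (by omega) (add_left_cancel h)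
  have hTcard : Tgt.ncard = k - 2 := by
    rw [hTgt, Set.ncard_image_of_injOn hinjT, ← Finset.coe_Ioo, Set.ncard_coe_finset,
      Nat.card_Ioo]
    omega
  have hkey : ∀ e ∈ S, ∃ p, Key i k d e p ∧ p ∈ Tgt := by
    intro e heS
    obtain ⟨heB, hseg⟩ := heS
    obtain ⟨p, hKp⟩ := segdata hn hB hdual hconn heB (hdnd e heB) (by omega) hkn hseg
    refine ⟨p, hKp, ?_⟩
    obtain ⟨a, b, q, hab, hbk, _, _, hp1, hp2, _⟩ := hKp
    exact ⟨zpos i p, by simp only [Set.mem_Ioo]; omega, add_zpos i p⟩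
  let f : Sym2 (ZMod n) → ZMod n :=
    fun e => if h : ∃ p, Key i k d e p ∧ p ∈ Tgt then h.choose else i
  have hf : ∀ e ∈ S, Key i k d e (f e) ∧ f e ∈ Tgt := by
    intro e heS
    have h := hkey e heS
    simp only [f, dif_pos h]
    exact h.choose_spec
  have hle : S.ncard ≤ Tgt.ncard := by
    refine Set.ncard_le_ncard_of_injOn f (fun e he => (hf e he).2) ?_ hTfin
    intro e he e' he' hfe
    have h2 := (hf e' he').1
    rw [← hfe] at h2
    exact key_inj hn hB hdual hconn he.1 he'.1 hkn (hf e he).1 h2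
  exact hTcard ▸ hle
end

section
/- Let G be a minimally 3-connected braced polygonal circuit on n vertices (so G has exactly n - 2 braces). Then every dual polygon G* of G is 3-connected. -/
/-!
Deleting at most two vertices from a graph on the `n`-gon that contains the boundary cycle leaves
a single boundary path, unless the two vertices `u, v` are not neighbours on the cycle; then it
leaves two paths, and the graph stays connected iff some edge crosses the chord `uv`. So `G*` is
3-connected as soon as every chord between non-neighbours is crossed by a dual brace.

A brace `e` crosses its dual brace `d e`, and no other brace does: `G - d e` is connected, so some
edge of `G` crosses `d e`, and any crossing edge other than `e` would keep `G - e - d e` connected.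
Consequently a boundary segment of `m + 1` vertices holds at most `m - 1` dual braces. If the brace
of one of them leaves the segment, its inner endpoint splits the segment into two shorter ones,
since any other dual brace straddling that endpoint would be crossed by this brace; otherwise all
these braces lie inside the segment, where the circuit count `2k - 3` leaves room for `m - 1`.

If no dual brace crossed `uv`, take a brace `a₀b₀` crossing `uv`, which exists because `G - {u, v}`
is connected. Every other dual brace lies on one of the segments `[u, a₀]`, `[a₀, v]`, `[v, b₀]`,
`[b₀, u]`. These hold at most `n - 4` dual braces in total, but there are `n - 3` of them.
-/

namespace Polygon

open Finset SimpleGraph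

variable {n : ℕ} {B : Finset (Sym2 (ZMod n))} {H : SimpleGraph (ZMod n)}

def cdist (u w : ZMod n) : ℕ := (w - u).val

lemma cdist_self (u : ZMod n) : cdist u u = 0 := by simp [cdist]

lemma cdist_eq_zero_iff {u w : ZMod n} : cdist u w = 0 ↔ w = u := by
  rw [cdist, ZMod.val_eq_zero, sub_eq_zero]

lemma cdist_add_natCast (u : ZMod n) {i : ℕ} (hi : i < n) : cdist u (u + i) = i := by
  rw [cdist, add_sub_cancel_left, ZMod.val_cast_of_lt hi]

lemma cdist_add_one (hn : 1 < n) (u : ZMod n) : cdist u (u + 1) = 1 := by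
  simpa using cdist_add_natCast u hn

def Btw (x w y : ZMod n) : Prop := 0 < cdist x w ∧ cdist x w < cdist x y

lemma Btw.ne_left {x w y : ZMod n} (h : Btw x w y) : w ≠ x := by
  rintro rfl; exact (cdist_self w ▸ h.1).false

lemma Btw.ne_right {x w y : ZMod n} (h : Btw x w y) : w ≠ y := by
  rintro rfl; exact h.2.false

lemma Btw.right_ne_left {x w y : ZMod n} (h : Btw x w y) : y ≠ x :=
  cdist_eq_zero_iff.not.1 (h.1.trans h.2).ne'

def Crosses (e f : Sym2 (ZMod n)) : Prop :=
  ∃ a b x y, e = s(a, b) ∧ f = s(x, y) ∧ Btw x a y ∧ Btw y b x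

lemma crosses_mk_right_iff {e : Sym2 (ZMod n)} {x y : ZMod n} :
    Crosses e s(x, y) ↔ ∃ a b, e = s(a, b) ∧ Btw x a y ∧ Btw y b x := by
  constructor
  · rintro ⟨a, b, x', y', rfl, hf, ha, hb⟩
    rcases Sym2.eq_iff.1 hf with ⟨rfl, rfl⟩ | ⟨rfl, rfl⟩
    · exact ⟨a, b, rfl, ha, hb⟩
    · exact ⟨b, a, Sym2.eq_swap, hb, ha⟩
  · rintro ⟨a, b, rfl, ha, hb⟩
    exact ⟨a, b, x, y, rfl, rfl, ha, hb⟩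

lemma bpGraph_adj_add_one (hn : 1 < n) (B : Finset (Sym2 (ZMod n))) (w : ZMod n) :
    (bpGraph n B).Adj w (w + 1) := by
  rw [bpGraph, fromEdgeSet_adj]
  refine ⟨.inr ⟨w, rfl⟩, fun h => ?_⟩
  have := cdist_add_one hn w
  rw [← h, cdist_self] at this
  omega

lemma bpGraph_adj_of_mem {a b : ZMod n} (h : s(a, b) ∈ B) (hab : a ≠ b) :
    (bpGraph n B).Adj a b := by
  rw [bpGraph, fromEdgeSet_adj]
  exact ⟨.inl h, hab⟩

lemma deleteEdges_bpGraph_adj_add_one (hn : 1 < n) {e : Sym2 (ZMod n)}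
    (he : ¬ IsBoundaryEdge n e) (w : ZMod n) :
    ((bpGraph n B).deleteEdges {e}).Adj w (w + 1) :=
  (deleteEdges_adj ..).2
    ⟨bpGraph_adj_add_one hn B w, fun h => he ⟨w, (Set.mem_singleton_iff.1 h).symm⟩⟩

def segment (a : ZMod n) (m : ℕ) : Finset (ZMod n) :=
  (range (m + 1)).image fun i : ℕ => a + (i : ZMod n)

lemma card_segment (a : ZMod n) {m : ℕ} (hm : m < n) : #(segment a m) = m + 1 := by
  rw [segment, card_image_of_injOn, card_range]
  intro i hi j hj hij
  simp only [coe_range, Set.mem_Iio] at hi hj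
  simpa [cdist_add_natCast a (show i < n by omega), cdist_add_natCast a (show j < n by omega)]
    using congrArg (cdist a) hij

lemma card_image_range_boundary_edges (a : ZMod n) {m : ℕ} (hm : m + 1 < n) :
    #((range m).image fun i : ℕ => s(a + (i : ZMod n), a + ((i + 1 : ℕ) : ZMod n))) = m := by
  rw [card_image_of_injOn, card_range]
  intro i hi j hj hij
  simp only [coe_range, Set.mem_Iio] at hi hj
  have := congrArg (Sym2.map (cdist a)) hij
  simp only [Sym2.map_mk, cdist_add_natCast a (show i < n by omega),
    cdist_add_natCast a (show j < n by omega), cdist_add_natCast a (show i + 1 < n by omega),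
    cdist_add_natCast a (show j + 1 < n by omega), Sym2.eq_iff] at this
  omega

variable [NeZero n]

lemma cdist_lt (u w : ZMod n) : cdist u w < n := ZMod.val_lt _

lemma add_cdist (u w : ZMod n) : u + (cdist u w : ZMod n) = w := by
  simp [cdist]

lemma cdist_injective (u : ZMod n) : Function.Injective (cdist u) := fun w w' h => by
  rw [← add_cdist u w, h, add_cdist]

lemma cdist_add_cdist (u v w : ZMod n) :
    cdist u v + cdist v w = cdist u w ∨ cdist u v + cdist v w = cdist u w + n := by
  have h : cdist u w = (cdist u v + cdist v w) % n := by
    rw [cdist, cdist, cdist, ← ZMod.val_add, sub_add_sub_cancel']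
  have := cdist_lt u v
  have := cdist_lt v w
  rcases lt_or_ge (cdist u v + cdist v w) n with hlt | hge
  · exact .inl (h.trans (Nat.mod_eq_of_lt hlt)).symm
  · right
    rw [h, Nat.mod_eq_sub_mod hge, Nat.mod_eq_of_lt (by omega)]
    omega

lemma cdist_add_cdist_of_ne {u v : ZMod n} (h : v ≠ u) : cdist u v + cdist v u = n := by
  have := cdist_eq_zero_iff.not.2 h
  rcases cdist_add_cdist u v u with h' | h' <;> rw [cdist_self] at h' <;> omega

lemma cdist_add_one_of_lt {u w : ZMod n} (h : cdist u w + 1 < n) :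
    cdist u (w + 1) = cdist u w + 1 := by
  rcases cdist_add_cdist u w (w + 1) with h' | h' <;>
    rw [cdist_add_one (by omega)] at h' <;> omega

lemma btw_iff_cdist {a x w y : ZMod n} (h : cdist a x ≤ cdist a y) :
    Btw x w y ↔ cdist a x < cdist a w ∧ cdist a w < cdist a y := by
  have := cdist_lt a w
  have := cdist_lt a y
  have := cdist_lt x w
  have := cdist_lt x y
  unfold Btw
  rcases cdist_add_cdist a x w with h1 | h1 <;> rcases cdist_add_cdist a x y with h2 | h2 <;> omega

lemma Btw.rotate {x w y : ZMod n} (h : Btw x w y) : Btw w y x := by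
  have := cdist_add_cdist_of_ne h.ne_left
  have := cdist_lt x y
  have := cdist_lt w y
  obtain ⟨h1, h2⟩ := h
  unfold Btw
  rcases cdist_add_cdist x w y with h' | h' <;> omega

lemma Btw.asymm {x w y : ZMod n} (h : Btw x w y) : ¬ Btw y w x := by
  have := cdist_add_cdist_of_ne h.right_ne_left
  have := cdist_lt x w
  obtain ⟨h1, h2⟩ := h
  rintro ⟨h3, h4⟩
  rcases cdist_add_cdist x y w with h' | h' <;> omega

lemma btw_or_btw {x w y : ZMod n} (hx : w ≠ x) (hy : w ≠ y) (hxy : y ≠ x) :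
    Btw x w y ∨ Btw y w x := by
  have := cdist_add_cdist_of_ne hxy
  have := cdist_eq_zero_iff.not.2 hx
  have := cdist_eq_zero_iff.not.2 hy
  have := (cdist_injective x).ne hy
  have := cdist_lt y w
  have := cdist_lt x w
  unfold Btw
  rcases cdist_add_cdist x y w with h' | h' <;> omega

lemma Btw.add_one {x w y : ZMod n} (h : Btw x w y) (hw : w + 1 ≠ y) : Btw x (w + 1) y := by
  have := cdist_lt x y
  have h1 := cdist_add_one_of_lt (u := x) (w := w) (by unfold Btw at h; omega)
  have := (cdist_injective x).ne hw
  obtain ⟨h2, h3⟩ := h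
  constructor <;> omega

lemma Btw.cdist_lt_cdist {x w y : ZMod n} (h : Btw y w x) : cdist x y < cdist x w := by
  have := cdist_add_cdist_of_ne h.right_ne_left
  obtain ⟨h1, h2⟩ := h
  rcases cdist_add_cdist x y w with h' | h' <;> omega

lemma btw_add_one {x y : ZMod n} (h : 2 ≤ cdist x y) : Btw x (x + 1) y := by
  have := cdist_lt x y
  rw [Btw, cdist_add_one (by omega)]
  omega

lemma preconnected_induce_setOf_cdist (hH : ∀ w, H.Adj w (w + 1)) (a : ZMod n) (p q : ℕ) :
    (H.induce {w | p ≤ cdist a w ∧ cdist a w < q}).Preconnected := by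
  set S := {w | p ≤ cdist a w ∧ cdist a w < q}
  have step : ∀ k, ∀ v w : S, cdist a w = cdist a v + k → (H.induce S).Reachable v w := by
    intro k
    induction k with
    | zero => intro v w h; rw [Subtype.ext (cdist_injective a h)]
    | succ k ih =>
      intro v w h
      have hv := v.2
      have hw := w.2
      have hsucc : cdist a (v + 1) = cdist a v + 1 := by
        have := cdist_lt a w; exact cdist_add_one_of_lt (by omega)
      have hmem : (v : ZMod n) + 1 ∈ S := by
        simp only [S, Set.mem_ofPred_eq] at hv hw ⊢; omega
      have hadj : (H.induce S).Adj v ⟨_, hmem⟩ := hH v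
      exact hadj.reachable.trans (ih _ w (by simp only [hsucc]; omega))
  intro v w
  rcases le_total (cdist a v) (cdist a w) with h | h
  · exact step (cdist a w - cdist a v) v w (by omega)
  · exact (step (cdist a v - cdist a w) w v (by omega)).symm

lemma connected_induce_setOf_le_cdist (hH : ∀ w, H.Adj w (w + 1)) (a : ZMod n) {p : ℕ}
    (hp : p < n) : (H.induce {w | p ≤ cdist a w}).Connected := by
  have hS : {w | p ≤ cdist a w} = {w | p ≤ cdist a w ∧ cdist a w < n} := by
    ext w; simp [cdist_lt]
  have hmem : a + (p : ZMod n) ∈ {w | p ≤ cdist a w} := by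
    simp [cdist_add_natCast a hp]
  rw [connected_iff]
  exact ⟨hS ▸ preconnected_induce_setOf_cdist hH a p n, ⟨⟨_, hmem⟩⟩⟩

lemma connected_induce_compl_pair_of_cdist_le_one (hH : ∀ w, H.Adj w (w + 1)) (hn : 2 < n)
    {x y : ZMod n} (hxy : cdist x y ≤ 1) : (H.induce ({x, y} : Set (ZMod n))ᶜ).Connected := by
  have hS : ({x, y} : Set (ZMod n))ᶜ = {w | cdist x y + 1 ≤ cdist x w} := by
    ext w
    simp only [Set.mem_compl_iff, Set.mem_insert_iff, Set.mem_singleton_iff, Set.mem_ofPred_eq]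
    rw [← cdist_eq_zero_iff, ← (cdist_injective x).eq_iff]
    omega
  rw [hS]
  exact connected_induce_setOf_le_cdist hH x (by omega)

lemma preconnected_induce_setOf_btw (hH : ∀ w, H.Adj w (w + 1)) (x y : ZMod n) :
    (H.induce {w | Btw x w y}).Preconnected :=
  preconnected_induce_setOf_cdist hH x 1 (cdist x y)

lemma compl_pair_eq_union_btw {x y : ZMod n} (hxy : y ≠ x) :
    ({x, y} : Set (ZMod n))ᶜ = {w | Btw x w y} ∪ {w | Btw y w x} := by
  ext w
  simp only [Set.mem_compl_iff, Set.mem_insert_iff, Set.mem_singleton_iff, not_or,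
    Set.mem_union, Set.mem_ofPred_eq]
  refine ⟨fun ⟨hx, hy⟩ => btw_or_btw hx hy hxy, ?_⟩
  rintro (h | h)
  · exact ⟨h.ne_left, h.ne_right⟩
  · exact ⟨h.ne_right, h.ne_left⟩

theorem connected_induce_compl_pair_iff (hH : ∀ w, H.Adj w (w + 1)) {x y : ZMod n}
    (hxy : 2 ≤ cdist x y) (hyx : 2 ≤ cdist y x) :
    (H.induce ({x, y} : Set (ZMod n))ᶜ).Connected ↔
      ∃ a b, H.Adj a b ∧ Btw x a y ∧ Btw y b x := by
  have hne : y ≠ x := by rintro rfl; rw [cdist_self] at hxy; omega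
  rw [compl_pair_eq_union_btw hne]
  constructor
  · intro hconn
    have hx1 := btw_add_one hxy
    have hy1 := btw_add_one hyx
    obtain ⟨p⟩ := hconn.preconnected ⟨x + 1, .inl hx1⟩ ⟨y + 1, .inr hy1⟩
    obtain ⟨d, -, hd1, hd2⟩ :=
      p.exists_boundary_dart {w | Btw x w.1 y} hx1 (fun h => h.asymm hy1)
    exact ⟨d.fst, d.snd, d.adj, hd1, d.snd.2.resolve_left hd2⟩
  · rintro ⟨a, b, hab, ha, hb⟩
    exact connected_induce_union (preconnected_induce_setOf_btw hH x y)
      (preconnected_induce_setOf_btw hH y x) ha hb hab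

theorem threeConnected_of_forall_crossing (hn : 4 ≤ n) (hH : ∀ w, H.Adj w (w + 1))
    (hcross : ∀ u v, 2 ≤ cdist u v → 2 ≤ cdist v u → ∃ a b, H.Adj a b ∧ Btw u a v ∧ Btw v b u) :
    ThreeConnected H := by
  have hpair : ∀ u v : ZMod n, (H.induce ({u, v} : Set (ZMod n))ᶜ).Connected := by
    intro u v
    by_cases huv : cdist u v ≤ 1
    · exact connected_induce_compl_pair_of_cdist_le_one hH (by omega) huv
    by_cases hvu : cdist v u ≤ 1
    · rw [Set.pair_comm]
      exact connected_induce_compl_pair_of_cdist_le_one hH (by omega) hvu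
    exact (connected_induce_compl_pair_iff hH (by omega) (by omega)).2
      (hcross u v (by omega) (by omega))
  refine ⟨by rwa [ZMod.card], fun s hs => ?_⟩
  interval_cases h : s.card
  · rw [Finset.card_eq_zero.1 h, Finset.coe_empty, Set.compl_empty,
      ← Set.eq_univ_of_forall fun w => Nat.zero_le (cdist 0 w)]
    exact connected_induce_setOf_le_cdist hH 0 (by omega)
  · obtain ⟨u, rfl⟩ := Finset.card_eq_one.1 h
    rw [Finset.coe_singleton, ← Set.pair_eq_singleton]
    exact hpair u u
  · obtain ⟨u, v, -, rfl⟩ := Finset.card_eq_two.1 h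
    rw [Finset.coe_pair]
    exact hpair u v

lemma mem_of_bpGraph_adj_of_btw {a b x y : ZMod n} (hab : (bpGraph n B).Adj a b)
    (ha : Btw x a y) (hb : Btw y b x) : s(a, b) ∈ B := by
  rw [bpGraph, fromEdgeSet_adj] at hab
  refine hab.1.resolve_right ?_
  rintro ⟨t, ht⟩
  rcases Sym2.eq_iff.1 ht with ⟨rfl, rfl⟩ | ⟨rfl, rfl⟩
  · exact hb.asymm (ha.add_one hb.ne_left)
  · exact ha.asymm (hb.add_one ha.ne_left)

theorem crosses_and_unique_of_separates (hn : 2 < n) {e f : Sym2 (ZMod n)}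
    (he : ¬ IsBoundaryEdge n e)
    (hG : ∀ x y : ZMod n, ((bpGraph n B).induce ({x, y} : Set (ZMod n))ᶜ).Connected)
    (hsep : ¬ (((bpGraph n B).deleteEdges {e}).induce {v | v ∈ f}ᶜ).Connected) :
    Crosses e f ∧ ∀ e' ∈ B, Crosses e' f → e' = e := by
  induction f using Sym2.ind with | _ x y => ?_
  have hset : {v | v ∈ s(x, y)}ᶜ = ({x, y} : Set (ZMod n))ᶜ := by ext; simp
  rw [hset] at hsep
  have hH := deleteEdges_bpGraph_adj_add_one (B := B) (by omega) he
  have hfar : 2 ≤ cdist x y ∧ 2 ≤ cdist y x := by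
    by_contra h
    rcases not_and_or.1 h with h | h
    · exact hsep (connected_induce_compl_pair_of_cdist_le_one hH hn (by omega))
    · rw [Set.pair_comm] at hsep
      exact hsep (connected_induce_compl_pair_of_cdist_le_one hH hn (by omega))
  have honly : ∀ a b, (bpGraph n B).Adj a b → Btw x a y → Btw y b x → s(a, b) = e := by
    intro a b hab ha hb
    by_contra hne
    exact hsep ((connected_induce_compl_pair_iff hH hfar.1 hfar.2).2
      ⟨a, b, (deleteEdges_adj ..).2 ⟨hab, hne⟩, ha, hb⟩)
  obtain ⟨a, b, hab, ha, hb⟩ :=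
    (connected_induce_compl_pair_iff (bpGraph_adj_add_one (by omega) B) hfar.1 hfar.2).1 (hG x y)
  refine ⟨crosses_mk_right_iff.2 ⟨a, b, (honly a b hab ha hb).symm, ha, hb⟩, ?_⟩
  intro e' he' hcr
  obtain ⟨a', b', rfl, ha', hb'⟩ := crosses_mk_right_iff.1 hcr
  exact honly a' b' (bpGraph_adj_of_mem he' fun h => ha'.asymm (h ▸ hb')) ha' hb'

lemma mem_segment {a w : ZMod n} {m : ℕ} (hm : m < n) : w ∈ segment a m ↔ cdist a w ≤ m := by
  simp only [segment, mem_image, mem_range]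
  constructor
  · rintro ⟨i, hi, rfl⟩
    rw [cdist_add_natCast a (by omega)]
    omega
  · exact fun h => ⟨cdist a w, by omega, add_cdist a w⟩

theorem card_filter_subset_segment_le
    (hB : ∀ e ∈ B, ¬ e.IsDiag ∧ ¬ IsBoundaryEdge n e)
    (hcircuit : ∀ s : Finset (ZMod n), 2 ≤ s.card → s.card < n →
      {e ∈ (bpGraph n B).edgeSet | ∀ v ∈ e, v ∈ s}.ncard ≤ 2 * s.card - 3)
    (a : ZMod n) {m : ℕ} (hm : 1 ≤ m) (hmn : m + 2 ≤ n) :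
    #{e ∈ B | ∀ w ∈ e, cdist a w ≤ m} ≤ m - 1 := by
  set bd := (range m).image fun i : ℕ => s(a + (i : ZMod n), a + ((i + 1 : ℕ) : ZMod n))
  have hdisj : Disjoint bd {e ∈ B | ∀ w ∈ e, cdist a w ≤ m} := by
    rw [Finset.disjoint_left]
    rintro _ he hB'
    obtain ⟨i, -, rfl⟩ := mem_image.1 he
    refine (hB _ (mem_filter.1 hB').1).2 ⟨a + i, ?_⟩
    push_cast
    ring_nf
  have hsub : (↑(bd ∪ {e ∈ B | ∀ w ∈ e, cdist a w ≤ m}) : Set (Sym2 (ZMod n))) ⊆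
      {e ∈ (bpGraph n B).edgeSet | ∀ v ∈ e, v ∈ segment a m} := by
    intro e he
    rcases mem_union.1 he with he | he
    · obtain ⟨i, hi, rfl⟩ := mem_image.1 he
      rw [mem_range] at hi
      have hadj : (bpGraph n B).Adj (a + i) (a + ((i + 1 : ℕ) : ZMod n)) := by
        rw [Nat.cast_succ, ← add_assoc]
        exact bpGraph_adj_add_one (by omega) B _
      refine ⟨hadj, fun v hv => (mem_segment (by omega)).2 ?_⟩
      rcases Sym2.mem_iff.1 hv with rfl | rfl <;> rw [cdist_add_natCast a (by omega)] <;> omega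
    · obtain ⟨heB, hseg⟩ := mem_filter.1 he
      induction e using Sym2.ind with | _ x y => ?_
      exact ⟨bpGraph_adj_of_mem heB (by simpa using (hB _ heB).1),
        fun v hv => (mem_segment (by omega)).2 (hseg v hv)⟩
  have hle := Set.ncard_le_ncard hsub (Set.toFinite _)
  rw [Set.ncard_coe_finset, card_union_of_disjoint hdisj,
    card_image_range_boundary_edges a (by omega)] at hle
  have := hcircuit (segment a m)
  rw [card_segment a (by omega)] at this
  specialize this (by omega) (by omega)
  omega

lemma exists_mk_eq_of_crosses {e f : Sym2 (ZMod n)} {a : ZMod n} {m : ℕ} (hcr : Crosses e f)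
    (hf : ∀ w ∈ f, cdist a w ≤ m) (he : ∃ w ∈ e, m < cdist a w) :
    ∃ a₀ b₀, e = s(a₀, b₀) ∧ 0 < cdist a a₀ ∧ cdist a a₀ < m ∧ m < cdist a b₀ := by
  obtain ⟨w, hw, hmw⟩ := he
  have key : ∀ a' b' x y, e = s(a', b') → f = s(x, y) → Btw x a' y → cdist a x ≤ cdist a y →
      ∃ a₀ b₀, e = s(a₀, b₀) ∧ 0 < cdist a a₀ ∧ cdist a a₀ < m ∧ m < cdist a b₀ := by
    rintro a' b' x y rfl rfl ha' hxy
    have := (btw_iff_cdist hxy).1 ha'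
    have := hf y (Sym2.mem_mk_right x y)
    refine ⟨a', b', rfl, by omega, by omega, ?_⟩
    rcases Sym2.mem_iff.1 hw with rfl | rfl
    · omega
    · exact hmw
  obtain ⟨a', b', x, y, he, hf, ha', hb'⟩ := hcr
  rcases le_total (cdist a x) (cdist a y) with hxy | hxy
  · exact key a' b' x y he hf ha' hxy
  · exact key b' a' y x (he.trans Sym2.eq_swap) (hf.trans Sym2.eq_swap) hb' hxy

lemma subset_segment_split_of_not_crosses {a a₀ b₀ : ZMod n} {m : ℕ} {f : Sym2 (ZMod n)}
    (hb₀ : m < cdist a b₀) (hf : ∀ w ∈ f, cdist a w ≤ m) (hnc : ¬ Crosses s(a₀, b₀) f) :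
    (∀ w ∈ f, cdist a w ≤ cdist a a₀) ∨ (∀ w ∈ f, cdist a₀ w ≤ m - cdist a a₀) := by
  induction f using Sym2.ind with | _ x y => ?_
  wlog hxy : cdist a x ≤ cdist a y generalizing x y
  · rw [Sym2.eq_swap (a := x)] at hf hnc ⊢
    exact this y x hf hnc (by omega)
  simp only [Sym2.mem_iff, forall_eq_or_imp, forall_eq] at hf ⊢
  by_cases hstr : cdist a x < cdist a a₀ ∧ cdist a a₀ < cdist a y
  · refine absurd (crosses_mk_right_iff.2 ⟨a₀, b₀, rfl, (btw_iff_cdist hxy).2 hstr, ?_⟩) hnc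
    have hy : Btw x y b₀ :=
      (btw_iff_cdist (a := a) (by omega)).2 ⟨hstr.1.trans hstr.2, hf.2.trans_lt hb₀⟩
    exact hy.rotate
  · have := cdist_lt a₀ x
    have := cdist_lt a₀ y
    rcases cdist_add_cdist a a₀ x with h | h <;> rcases cdist_add_cdist a a₀ y with h' | h' <;>
      omega

def dualsIn (B : Finset (Sym2 (ZMod n))) (d : Sym2 (ZMod n) → Sym2 (ZMod n)) (a : ZMod n)
    (m : ℕ) : Finset (Sym2 (ZMod n)) :=
  {e ∈ B | ∀ w ∈ d e, cdist a w ≤ m}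

variable {d : Sym2 (ZMod n) → Sym2 (ZMod n)}

lemma subset_insert_dualsIn_union {a a₀ b₀ : ZMod n} {m : ℕ}
    (hd : ∀ e ∈ B, ∀ e' ∈ B, Crosses e' (d e) → e' = e) (he₀ : s(a₀, b₀) ∈ B)
    (hb₀ : m < cdist a b₀) :
    dualsIn B d a m ⊆
      insert s(a₀, b₀) (dualsIn B d a (cdist a a₀) ∪ dualsIn B d a₀ (m - cdist a a₀)) := by
  intro e he
  obtain ⟨heB, hseg⟩ := mem_filter.1 he
  rw [mem_insert, mem_union]
  by_cases he' : e = s(a₀, b₀)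
  · exact .inl he'
  have hnc : ¬ Crosses s(a₀, b₀) (d e) := fun h => he' (hd e heB _ he₀ h).symm
  exact .inr ((subset_segment_split_of_not_crosses hb₀ hseg hnc).imp
    (fun h => mem_filter.2 ⟨heB, h⟩) (fun h => mem_filter.2 ⟨heB, h⟩))

theorem card_dualsIn_le
    (hB : ∀ e ∈ B, ¬ e.IsDiag ∧ ¬ IsBoundaryEdge n e)
    (hcircuit : ∀ s : Finset (ZMod n), 2 ≤ s.card → s.card < n →
      {e ∈ (bpGraph n B).edgeSet | ∀ v ∈ e, v ∈ s}.ncard ≤ 2 * s.card - 3)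
    (hd : ∀ e ∈ B, Crosses e (d e) ∧ ∀ e' ∈ B, Crosses e' (d e) → e' = e)
    {m : ℕ} (hm : 1 ≤ m) (hmn : m + 2 ≤ n) (a : ZMod n) :
    #(dualsIn B d a m) ≤ m - 1 := by
  induction m using Nat.strong_induction_on generalizing a with
  | _ m ih =>
  by_cases hexit : ∃ e ∈ dualsIn B d a m, ∃ w ∈ e, m < cdist a w
  · obtain ⟨e₀, he₀, hout⟩ := hexit
    obtain ⟨he₀B, hseg₀⟩ := mem_filter.1 he₀
    obtain ⟨a₀, b₀, rfl, hr0, hrm, hb₀⟩ := exists_mk_eq_of_crosses (hd _ he₀B).1 hseg₀ hout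
    calc #(dualsIn B d a m)
        ≤ #(dualsIn B d a (cdist a a₀) ∪ dualsIn B d a₀ (m - cdist a a₀)) + 1 :=
          (card_le_card (subset_insert_dualsIn_union (fun e he => (hd e he).2) he₀B hb₀)).trans
            (card_insert_le _ _)
      _ ≤ #(dualsIn B d a (cdist a a₀)) + #(dualsIn B d a₀ (m - cdist a a₀)) + 1 := by
          gcongr; exact card_union_le _ _
      _ ≤ (cdist a a₀ - 1) + (m - cdist a a₀ - 1) + 1 := by
          gcongr
          · exact ih _ hrm (by omega) (by omega) a
          · exact ih _ (by omega) (by omega) (by omega) a₀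
      _ = m - 1 := by omega
  · push Not at hexit
    refine (card_le_card fun e he => ?_).trans (card_filter_subset_segment_le hB hcircuit a hm hmn)
    exact mem_filter.2 ⟨(mem_filter.1 he).1, hexit e he⟩

lemma subset_segment_or_subset_segment_of_not_crosses {u v : ZMod n} {f : Sym2 (ZMod n)}
    (hvu : v ≠ u) (hnc : ¬ Crosses f s(u, v)) :
    (∀ w ∈ f, cdist u w ≤ cdist u v) ∨ (∀ w ∈ f, cdist v w ≤ cdist v u) := by
  induction f using Sym2.ind with | _ x y => ?_
  have h₁ : ¬ (Btw u x v ∧ Btw v y u) := fun h => hnc (crosses_mk_right_iff.2 ⟨x, y, rfl, h⟩)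
  have h₂ : ¬ (Btw u y v ∧ Btw v x u) :=
    fun h => hnc (crosses_mk_right_iff.2 ⟨y, x, Sym2.eq_swap, h⟩)
  have := cdist_add_cdist_of_ne hvu
  have := cdist_lt u x
  have := cdist_lt u y
  have := cdist_lt v x
  have := cdist_lt v y
  simp only [Btw, Sym2.mem_iff, forall_eq_or_imp, forall_eq] at h₁ h₂ ⊢
  rcases cdist_add_cdist u v x with hx | hx <;> rcases cdist_add_cdist u v y with hy | hy <;> omega

lemma erase_subset_dualsIn_of_not_crosses {u v a₀ b₀ : ZMod n}
    (hd : ∀ e ∈ B, ∀ e' ∈ B, Crosses e' (d e) → e' = e) (he₀ : s(a₀, b₀) ∈ B)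
    (ha₀ : Btw u a₀ v) (hb₀ : Btw v b₀ u) (hnone : ∀ e ∈ B, ¬ Crosses (d e) s(u, v)) :
    B.erase s(a₀, b₀) ⊆
      (dualsIn B d u (cdist u a₀) ∪ dualsIn B d a₀ (cdist u v - cdist u a₀)) ∪
        (dualsIn B d v (cdist v b₀) ∪ dualsIn B d b₀ (cdist v u - cdist v b₀)) := by
  intro e he
  obtain ⟨he', heB⟩ := mem_erase.1 he
  rcases subset_segment_or_subset_segment_of_not_crosses ha₀.right_ne_left (hnone e heB)
    with h | h
  · have := subset_insert_dualsIn_union hd he₀ hb₀.cdist_lt_cdist (mem_filter.2 ⟨heB, h⟩)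
    exact mem_union_left _ ((mem_insert.1 this).resolve_left he')
  · have := subset_insert_dualsIn_union hd (Sym2.eq_swap ▸ he₀) ha₀.cdist_lt_cdist
      (mem_filter.2 ⟨heB, h⟩)
    rw [Sym2.eq_swap] at he'
    exact mem_union_right _ ((mem_insert.1 this).resolve_left he')

theorem exists_crosses_dual (hn : 4 ≤ n)
    (hB : ∀ e ∈ B, ¬ e.IsDiag ∧ ¬ IsBoundaryEdge n e)
    (hcircuit : ∀ s : Finset (ZMod n), 2 ≤ s.card → s.card < n →
      {e ∈ (bpGraph n B).edgeSet | ∀ v ∈ e, v ∈ s}.ncard ≤ 2 * s.card - 3)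
    (hcard : B.card = n - 2)
    (hG : ∀ x y : ZMod n, ((bpGraph n B).induce ({x, y} : Set (ZMod n))ᶜ).Connected)
    (hd : ∀ e ∈ B, Crosses e (d e) ∧ ∀ e' ∈ B, Crosses e' (d e) → e' = e)
    {u v : ZMod n} (huv : 2 ≤ cdist u v) (hvu : 2 ≤ cdist v u) :
    ∃ e ∈ B, Crosses (d e) s(u, v) := by
  by_contra hnone
  push Not at hnone
  obtain ⟨a₀, b₀, hab, ha₀, hb₀⟩ :=
    (connected_induce_compl_pair_iff (bpGraph_adj_add_one (by omega) B) huv hvu).1 (hG u v)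
  have he₀ := mem_of_bpGraph_adj_of_btw hab ha₀ hb₀
  have hle := (card_le_card (erase_subset_dualsIn_of_not_crosses (fun e he => (hd e he).2)
    he₀ ha₀ hb₀ hnone)).trans
      ((card_union_le _ _).trans (add_le_add (card_union_le _ _) (card_union_le _ _)))
  rw [card_erase_of_mem he₀, hcard] at hle
  have := cdist_add_cdist_of_ne ha₀.right_ne_left
  obtain ⟨h₁, h₂⟩ := ha₀
  obtain ⟨h₃, h₄⟩ := hb₀
  have := card_dualsIn_le hB hcircuit hd (m := cdist u a₀) (by omega) (by omega) u
  have := card_dualsIn_le hB hcircuit hd (m := cdist u v - cdist u a₀) (by omega) (by omega) a₀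
  have := card_dualsIn_le hB hcircuit hd (m := cdist v b₀) (by omega) (by omega) v
  have := card_dualsIn_le hB hcircuit hd (m := cdist v u - cdist v b₀) (by omega) (by omega) b₀
  omega

end Polygon

open Polygon

theorem stmt15_general (n : ℕ) [NeZero n] (hn : 4 ≤ n) (B : Finset (Sym2 (ZMod n)))
    (hB : ∀ e ∈ B, ¬ e.IsDiag ∧ ¬ IsBoundaryEdge n e)
    (hcard : B.card = n - 2)
    (hcircuit : ∀ s : Finset (ZMod n), 2 ≤ s.card → s.card < n →
      {e ∈ (bpGraph n B).edgeSet | ∀ v ∈ e, v ∈ s}.ncard ≤ 2 * s.card - 3)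
    (hmin : MinThreeConnectedBP n B)
    (d : Sym2 (ZMod n) → Sym2 (ZMod n))
    (hdual : ∀ e ∈ B,
      ¬ (((bpGraph n B).deleteEdges {e}).induce
          ({v : ZMod n | v ∈ d e}ᶜ)).Connected) :
    ThreeConnected (bpGraph n (B.image d)) := by
  have hG : ∀ x y : ZMod n, ((bpGraph n B).induce ({x, y} : Set (ZMod n))ᶜ).Connected :=
    fun x y => Finset.coe_pair (a := x) (b := y) ▸ hmin.1.2 {x, y} Finset.card_le_two
  have hd : ∀ e ∈ B, Crosses e (d e) ∧ ∀ e' ∈ B, Crosses e' (d e) → e' = e := fun e he =>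
    crosses_and_unique_of_separates (by omega) (hB e he).2 hG (hdual e he)
  refine threeConnected_of_forall_crossing hn (bpGraph_adj_add_one (by omega) _)
    fun u v huv hvu => ?_
  obtain ⟨e, he, hcr⟩ := exists_crosses_dual hn hB hcircuit hcard hG hd huv hvu
  obtain ⟨a, b, hab, ha, hb⟩ := crosses_mk_right_iff.1 hcr
  exact ⟨a, b, bpGraph_adj_of_mem (hab ▸ Finset.mem_image_of_mem d he)
    (fun h => ha.asymm (h ▸ hb)), ha, hb⟩

/-- Let `G` be a minimally 3-connected braced polygonal circuit on
`n` vertices (so `G` has exactly `n - 2` braces and satisfies the circuit count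
condition), and let `d` pick a dual brace for each brace.  Then the dual polygon
`G*` (boundary cycle together with the dual braces) is 3-connected. -/
theorem stmt15 (n : ℕ) [NeZero n] (hn : 4 ≤ n) (B : Finset (Sym2 (ZMod n)))
    (hB : ∀ e ∈ B, ¬ e.IsDiag ∧ ¬ IsBoundaryEdge n e)
    (hcard : B.card = n - 2)
    (hcircuit : ∀ s : Finset (ZMod n), 2 ≤ s.card → s.card < n →
      {e ∈ (bpGraph n B).edgeSet | ∀ v ∈ e, v ∈ s}.ncard ≤ 2 * s.card - 3)
    (hmin : MinThreeConnectedBP n B)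
    (d : Sym2 (ZMod n) → Sym2 (ZMod n))
    (hdnd : ∀ e ∈ B, ¬ (d e).IsDiag)
    (hdual : ∀ e ∈ B,
      ¬ (((bpGraph n B).deleteEdges {e}).induce
          ({v : ZMod n | v ∈ d e}ᶜ)).Connected) :
    ThreeConnected (bpGraph n (B.image d)) :=
  stmt15_general n hn B hB hcard hcircuit hmin d hdual
end
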